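/- arXiv:2311.00345 — 6 statements merged into one kernel-verified Lean document; each statement's English description precedes it below -/
import Mathlib

section
/- A Hausdorff topological group G is a q-space if and only if there is a closed countably compact subgroup H of G such that the quotient space G/H is metrizable and the canonical quotient mapping p : G → G/H is quasi-perfect. -/
open Filter Topology Set Pointwise TopologicalSpace

universe u

section Defs

variable {X : Type*}

/-- A subset `s` of a topological space is countably compact (in the ambient space) if every
countable open cover of `s` (indexed by `ℕ`) has a finite subcover. -/
def IsCountablyCompactIn [TopologicalSpace X] (s : Set X) : Prop :=
  ∀ U : ℕ → Set X, (∀ n, IsOpen (U n)) → s ⊆ ⋃ n, U n → ∃ t : Finset ℕ, s ⊆ ⋃ n ∈ t, U n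

/-- `U` is a q-sequence at `x`: a sequence of open neighbourhoods of `x` such that every
sequence of points chosen from the `U n` has an accumulation (cluster) point in `X`. -/
def IsQSequenceAt [TopologicalSpace X] (x : X) (U : ℕ → Set X) : Prop :=
  (∀ n, IsOpen (U n) ∧ x ∈ U n) ∧
    ∀ u : ℕ → X, (∀ n, u n ∈ U n) → ∃ p : X, MapClusterPt p Filter.atTop u

/-- A space is a q-space if every point has a q-sequence. -/
def QSpace (X : Type*) [TopologicalSpace X] : Prop :=
  ∀ x : X, ∃ U : ℕ → Set X, IsQSequenceAt x U

/-- A space is a strict q-space if every point has a q-sequence whose intersection is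
sequentially compact. -/
def StrictQSpace (X : Type*) [TopologicalSpace X] : Prop :=
  ∀ x : X, ∃ U : ℕ → Set X, IsQSequenceAt x U ∧ IsSeqCompact (⋂ n, U n)

/-- `U` is a strong q-sequence at `x`: a sequence of open neighbourhoods of `x` such that every
sequence of points chosen from the `U n` has a convergent subsequence. -/
def IsStrongQSequenceAt [TopologicalSpace X] (x : X) (U : ℕ → Set X) : Prop :=
  (∀ n, IsOpen (U n) ∧ x ∈ U n) ∧
    ∀ u : ℕ → X, (∀ n, u n ∈ U n) →
      ∃ (p : X) (φ : ℕ → ℕ), StrictMono φ ∧ Filter.Tendsto (u ∘ φ) Filter.atTop (nhds p)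

/-- A space is a strong q-space if every point has a strong q-sequence. -/
def StrongQSpace (X : Type*) [TopologicalSpace X] : Prop :=
  ∀ x : X, ∃ U : ℕ → Set X, IsStrongQSequenceAt x U

/-- A subset `A` is of countable character in `X` if there is a countable family of open
neighbourhoods of `A` such that every open neighbourhood of `A` contains a member of it. -/
def HasCountableCharacter [TopologicalSpace X] (A : Set X) : Prop :=
  ∃ U : ℕ → Set X, (∀ n, IsOpen (U n) ∧ A ⊆ U n) ∧
    ∀ W : Set X, IsOpen W → A ⊆ W → ∃ n, U n ⊆ W

/-- A topological group is ω-balanced if for every neighbourhood `U` of the identity there is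
a countable family `γ` of open neighbourhoods of the identity such that for every `x` some
`V ∈ γ` satisfies `xVx⁻¹ ⊆ U`. -/
def OmegaBalanced (G : Type*) [Group G] [TopologicalSpace G] : Prop :=
  ∀ U : Set G, U ∈ nhds (1 : G) → ∃ γ : Set (Set G), γ.Countable ∧
    (∀ V ∈ γ, IsOpen V ∧ (1 : G) ∈ V) ∧
    ∀ x : G, ∃ V ∈ γ, ∀ v ∈ V, x * v * x⁻¹ ∈ U

/-- A topological group is ω-narrow if for every open neighbourhood `V` of the identity there
is a countable set `A` with `A * V = G`. -/
def OmegaNarrow (G : Type*) [Group G] [TopologicalSpace G] : Prop :=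
  ∀ V : Set G, IsOpen V → (1 : G) ∈ V → ∃ A : Set G, A.Countable ∧ A * V = Set.univ

/-- A topological group is feathered if it has a nonempty compact subset of countable
character. -/
def IsFeathered (G : Type*) [Group G] [TopologicalSpace G] : Prop :=
  ∃ K : Set G, K.Nonempty ∧ IsCompact K ∧ HasCountableCharacter K

/-- A subgroup `H` of a topological group is neutral if for every open neighbourhood `U` of the
identity there is an open neighbourhood `V` of the identity with `HV ⊆ UH`. -/
def IsNeutralSubgroup {G : Type*} [Group G] [TopologicalSpace G] (H : Subgroup G) : Prop :=
  ∀ U : Set G, IsOpen U → (1 : G) ∈ U →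
    ∃ V : Set G, IsOpen V ∧ (1 : G) ∈ V ∧ (H : Set G) * V ⊆ U * (H : Set G)

end Defs

/-!
For `H` take the intersection of symmetric open neighbourhoods `V n` of `1` with
`V (n + 1) * V (n + 1) ⊆ V n` chosen inside a q-sequence at `1`. Every sequence with `u n ∈ V n`
clusters at a point of `H`; this makes `H` countably compact, makes the `V n` a neighbourhood base
of `H` and makes `G → G ⧸ H` closed. The relations "`a⁻¹ * b ∈ V n` for some representatives `a`,
`b`" then form a countable base of a uniformity inducing the topology of `G ⧸ H`.

Conversely, if `p : X → Y` is quasi-perfect and `Y` is first countable, the preimages of a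
countable base at `p x` form a q-sequence at `x`: the closures of the tails of a sequence chosen
from them meet the countably compact fibre `p ⁻¹' {p x}`, since their images are closed and
contain the limit `p x`.
-/

open scoped SetRel Uniformity

section Topology

variable {X Y : Type*} [TopologicalSpace X] [TopologicalSpace Y]

theorem isCountablyCompactIn_iff_isCountablyCompact {s : Set X} :
    IsCountablyCompactIn s ↔ IsCountablyCompact s :=
  isCountablyCompact_iff_countable_open_cover.symm

theorem isCountablyCompact_of_forall_mapClusterPt {s : Set X}
    (h : ∀ u : ℕ → X, (∀ n, u n ∈ s) → ∃ a ∈ s, MapClusterPt a atTop u) :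
    IsCountablyCompact s := by
  intro f _ _ hfs
  obtain ⟨t, ht⟩ := f.exists_antitone_basis
  choose u hut hus using fun n =>
    Filter.nonempty_of_mem (inter_mem (ht.mem n) (le_principal_iff.1 hfs))
  obtain ⟨a, has, ha⟩ := h u hus
  exact ⟨a, has, ha.clusterPt.mono (ht.tendsto hut)⟩

theorem IsCountablyCompact.inter_iInter_nonempty_of_antitone {s : Set X}
    (hs : IsCountablyCompact s) {C : ℕ → Set X} (hC : Antitone C) (hCc : ∀ n, IsClosed (C n))
    (hsC : ∀ n, (s ∩ C n).Nonempty) : (s ∩ ⋂ n, C n).Nonempty := by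
  by_contra h
  have hcover : s ⊆ ⋃ n, (C n)ᶜ := by
    rw [← compl_iInter, subset_compl_iff_disjoint_right, disjoint_iff_inter_eq_empty]
    exact not_nonempty_iff_eq_empty.1 h
  obtain ⟨n, hn⟩ := hs.elim_directed_cover _ (fun n => (hCc n).isOpen_compl) hcover
    (Monotone.directed_le fun _ _ hmn => compl_subset_compl.2 (hC hmn))
  obtain ⟨x, hxs, hxC⟩ := hsC n
  exact hn hxs hxC

structure IsQuasiPerfectMap (f : X → Y) : Prop where
  continuous : Continuous f
  isClosedMap : IsClosedMap f
  isCountablyCompact_preimage_singleton : ∀ y, IsCountablyCompact (f ⁻¹' {y})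

theorem IsQuasiPerfectMap.qSpace [FirstCountableTopology Y] {f : X → Y}
    (hf : IsQuasiPerfectMap f) : QSpace X := by
  intro x
  obtain ⟨B, hB⟩ := (𝓝 (f x)).exists_antitone_basis
  refine ⟨fun n => f ⁻¹' interior (B n), fun n => ⟨isOpen_interior.preimage hf.continuous,
    mem_interior_iff_mem_nhds.2 (hB.mem n)⟩, fun u hu => ?_⟩
  have hfu : Tendsto (f ∘ u) atTop (𝓝 (f x)) := hB.tendsto fun n => interior_subset (hu n)
  have hmeet : ∀ k, (f ⁻¹' {f x} ∩ closure (u '' Ici k)).Nonempty := by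
    intro k
    obtain ⟨a, ha, hax⟩ : f x ∈ f '' closure (u '' Ici k) :=
      (hf.isClosedMap _ isClosed_closure).mem_of_tendsto hfu <| (eventually_ge_atTop k).mono
        fun n hn => mem_image_of_mem f (subset_closure ⟨n, hn, rfl⟩)
    exact ⟨a, hax, ha⟩
  obtain ⟨a, -, ha⟩ :=
    (hf.isCountablyCompact_preimage_singleton (f x)).inter_iInter_nonempty_of_antitone
      (fun _ _ hmn => closure_mono (image_mono (Ici_subset_Ici.2 hmn)))
      (fun _ => isClosed_closure) hmeet
  exact ⟨a, mapClusterPt_atTop_iff_forall_mem_closure.2 (mem_iInter.1 ha)⟩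

theorem metrizableSpace_of_hasBasis_nhds [T0Space X] (E : ℕ → SetRel X X) (hE : Antitone E)
    (hsymm : ∀ n x y, (x, y) ∈ E n → (y, x) ∈ E n) (hcomp : ∀ n, ∃ m, E m ○ E m ⊆ E n)
    (hnhds : ∀ x, (𝓝 x).HasBasis (fun _ => True) fun n => {y | (x, y) ∈ E n}) :
    MetrizableSpace X := by
  have hU : (⨅ n, 𝓟 (E n)).HasBasis (fun _ => True) E := hasBasis_iInf_principal hE.directed_ge
  let _ : UniformSpace X :=
    { uniformity := ⨅ n, 𝓟 (E n)
      symm := (hU.tendsto_iff hU).2 fun n _ => ⟨n, trivial, fun p hp => hsymm n p.1 p.2 hp⟩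
      comp := ((hU.lift' (monotone_id.relComp monotone_id)).le_basis_iff hU).2 fun n _ =>
        (hcomp n).imp fun _ hm => ⟨trivial, hm⟩
      nhds_eq_comap_uniformity := fun x => (hnhds x).eq_of_same_basis (hU.comap (Prod.mk x)) }
  have : IsCountablyGenerated (𝓤 X) := hU.isCountablyGenerated
  exact UniformSpace.metrizableSpace

end Topology

section TopologicalGroup

variable {G : Type*} [Group G] [TopologicalSpace G]

theorem exists_isOpen_inv_eq_mul_subset [ContinuousMul G] [ContinuousInv G] {U : Set G}
    (hU : U ∈ 𝓝 (1 : G)) : ∃ V : Set G, IsOpen V ∧ (1 : G) ∈ V ∧ V⁻¹ = V ∧ V * V ⊆ U := by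
  obtain ⟨V, hVo, hV1, hVU⟩ := exists_open_nhds_one_mul_subset hU
  refine ⟨V ∩ V⁻¹, hVo.inter hVo.inv, ⟨hV1, by simpa using hV1⟩, by simp [inter_comm], ?_⟩
  exact (mul_subset_mul inter_subset_left inter_subset_left).trans hVU

theorem QuotientGroup.isCountablyCompact_preimage_mk [ContinuousMul G] {H : Subgroup G}
    (hH : IsCountablyCompact (H : Set G)) (y : G ⧸ H) :
    IsCountablyCompact ((QuotientGroup.mk : G → G ⧸ H) ⁻¹' {y}) := by
  obtain ⟨x, rfl⟩ := QuotientGroup.mk_surjective y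
  rw [← image_singleton, QuotientGroup.preimage_image_mk_eq_mul, singleton_mul]
  exact hH.image (continuous_const_mul x)

/-- `⋂ n, c n` is the subgroup `H` of the theorem. -/
structure QChain (G : Type*) [Group G] [TopologicalSpace G] where
  toFun : ℕ → Set G
  isOpen : ∀ n, IsOpen (toFun n)
  one_mem : ∀ n, (1 : G) ∈ toFun n
  inv_mem : ∀ n, ∀ a ∈ toFun n, a⁻¹ ∈ toFun n
  mul_mem : ∀ n, ∀ a ∈ toFun (n + 1), ∀ b ∈ toFun (n + 1), a * b ∈ toFun n
  exists_mapClusterPt : ∀ u : ℕ → G, (∀ n, u n ∈ toFun n) → ∃ p, MapClusterPt p atTop u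

theorem IsQSequenceAt.nonempty_qChain [IsTopologicalGroup G] {U : ℕ → Set G}
    (hU : IsQSequenceAt (1 : G) U) : Nonempty (QChain G) := by
  have hUn : ∀ n, U n ∈ 𝓝 (1 : G) := fun n => (hU.1 n).1.mem_nhds (hU.1 n).2
  choose! W hWo hW1 hWinv hWmul using
    fun S (hS : S ∈ 𝓝 (1 : G)) => exists_isOpen_inv_eq_mul_subset hS
  let S : ℕ → Set G := fun n => Nat.rec (U 0) (fun n s => W s ∩ U (n + 1)) n
  have hS : ∀ n, S n ∈ 𝓝 (1 : G) := by
    intro n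
    induction n with
    | zero => exact hUn 0
    | succ n ih => exact inter_mem ((hWo _ ih).mem_nhds (hW1 _ ih)) (hUn _)
  have hSU : ∀ n, S n ⊆ U n := by
    rintro (_ | n)
    exacts [subset_rfl, inter_subset_right]
  have hWS : ∀ n, W (S n) ⊆ S n := fun n a ha => by
    simpa using hWmul _ (hS n) (mul_mem_mul ha (hW1 _ (hS n)))
  exact ⟨{
    toFun := fun n => W (S n)
    isOpen := fun n => hWo _ (hS n)
    one_mem := fun n => hW1 _ (hS n)
    inv_mem := fun n a ha => hWinv _ (hS n) ▸ inv_mem_inv.2 ha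
    mul_mem := fun n a ha b hb => (hWmul _ (hS (n + 1)) (mul_mem_mul ha hb)).1
    exists_mapClusterPt := fun u hu => hU.2 u fun n => hSU n (hWS n (hu n)) }⟩

namespace QChain

instance : CoeFun (QChain G) fun _ => ℕ → Set G := ⟨toFun⟩

variable (c : QChain G)

theorem succ_subset (n : ℕ) : c (n + 1) ⊆ c n := fun a ha => by
  simpa using c.mul_mem n a ha 1 (c.one_mem _)

theorem antitone : Antitone c := antitone_nat_of_succ_le c.succ_subset

def subgroup : Subgroup G where
  carrier := ⋂ n, c n
  one_mem' := mem_iInter.2 c.one_mem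
  mul_mem' ha hb := mem_iInter.2 fun n => c.mul_mem n _ (mem_iInter.1 ha _) _ (mem_iInter.1 hb _)
  inv_mem' ha := mem_iInter.2 fun n => c.inv_mem n _ (mem_iInter.1 ha n)

theorem subgroup_subset (n : ℕ) : (c.subgroup : Set G) ⊆ c n := iInter_subset _ n

def entourage (n : ℕ) : SetRel (G ⧸ c.subgroup) (G ⧸ c.subgroup) :=
  {p | ∃ a b : G, (a : G ⧸ c.subgroup) = p.1 ∧ (b : G ⧸ c.subgroup) = p.2 ∧ a⁻¹ * b ∈ c n}

theorem entourage_antitone : Antitone c.entourage :=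
  fun _ _ hmn _ ⟨a, b, ha, hb, hab⟩ => ⟨a, b, ha, hb, c.antitone hmn hab⟩

theorem swap_mem_entourage {n : ℕ} {x y : G ⧸ c.subgroup} (h : (x, y) ∈ c.entourage n) :
    (y, x) ∈ c.entourage n := by
  obtain ⟨a, b, ha, hb, hab⟩ := h
  exact ⟨b, a, hb, ha, by simpa using c.inv_mem n _ hab⟩

theorem entourage_comp_subset (n : ℕ) :
    c.entourage (n + 2) ○ c.entourage (n + 2) ⊆ c.entourage n := by
  rintro ⟨_, _⟩ ⟨_, ⟨a, b, rfl, hb, hab⟩, ⟨b', d, hb', rfl, hbd⟩⟩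
  have hbb' : b⁻¹ * b' ∈ c.subgroup := QuotientGroup.eq.1 (hb.trans hb'.symm)
  refine ⟨a, d, rfl, rfl, ?_⟩
  have hsplit : a⁻¹ * d = a⁻¹ * b * (b⁻¹ * b') * (b'⁻¹ * d) := by group
  rw [hsplit]
  exact c.mul_mem n _ (c.mul_mem _ _ hab _ (c.subgroup_subset _ hbb')) _ (c.succ_subset _ hbd)

variable [IsTopologicalGroup G]

theorem preimage_mul_left_mem_nhds (z : G) (n : ℕ) : (z⁻¹ * ·) ⁻¹' c n ∈ 𝓝 z :=
  (continuous_const_mul z⁻¹).continuousAt.preimage_mem_nhds <| by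
    simpa using (c.isOpen n).mem_nhds (c.one_mem n)

theorem closure_succ_subset (n : ℕ) : closure (c (n + 1)) ⊆ c n := fun z hz => by
  obtain ⟨a, hza, ha⟩ := mem_closure_iff_nhds.1 hz _ (c.preimage_mul_left_mem_nhds z (n + 1))
  simpa using c.mul_mem n a ha _ (c.inv_mem _ _ hza)

theorem isClosed_subgroup : IsClosed (c.subgroup : Set G) :=
  isClosed_of_closure_subset fun _ hz => mem_iInter.2 fun n =>
    c.closure_succ_subset n (closure_mono (c.subgroup_subset (n + 1)) hz)

theorem exists_mapClusterPt_mem_subgroup {u : ℕ → G} (hu : ∀ n, u n ∈ c n) :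
    ∃ q ∈ c.subgroup, MapClusterPt q atTop u := by
  obtain ⟨q, hq⟩ := c.exists_mapClusterPt u hu
  refine ⟨q, mem_iInter.2 fun n => c.closure_succ_subset n ?_, hq⟩
  exact hq.mem_closure_of_mem _
    ((eventually_ge_atTop (n + 1)).mono fun m hm => c.antitone hm (hu m))

theorem isCountablyCompact_subgroup : IsCountablyCompact (c.subgroup : Set G) :=
  isCountablyCompact_of_forall_mapClusterPt fun _ hu =>
    c.exists_mapClusterPt_mem_subgroup fun n => c.subgroup_subset n (hu n)

theorem exists_subset_of_isOpen {W : Set G} (hW : IsOpen W) (hHW : (c.subgroup : Set G) ⊆ W) :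
    ∃ n, c n ⊆ W := by
  by_contra! h
  choose u hu huW using fun n => not_subset.1 (h n)
  obtain ⟨q, hq, hqu⟩ := c.exists_mapClusterPt_mem_subgroup hu
  have hqW : q ∈ closure Wᶜ := hqu.mem_closure_of_mem _ (mem_map.2 (univ_mem' huW))
  exact (hW.isClosed_compl.closure_eq ▸ hqW) (hHW hq)

theorem isClosedMap_mk : IsClosedMap (QuotientGroup.mk : G → G ⧸ c.subgroup) := by
  intro F hF
  rw [← (QuotientGroup.isQuotientMap_mk _).isClosed_preimage,
    QuotientGroup.preimage_image_mk_eq_mul]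
  refine isClosed_of_closure_subset fun z hz => ?_
  have hnear : ∀ n, ∃ f ∈ F, z⁻¹ * f ∈ c n := by
    intro n
    obtain ⟨_, hzg, f, hf, h, hh, rfl⟩ :=
      mem_closure_iff_nhds.1 hz _ (c.preimage_mul_left_mem_nhds z (n + 1))
    refine ⟨f, hf, ?_⟩
    simpa [mul_assoc] using
      c.mul_mem n _ hzg _ (c.subgroup_subset (n + 1) (c.subgroup.inv_mem hh))
  choose f hfF hf using hnear
  obtain ⟨q, hq, hfq⟩ := c.exists_mapClusterPt_mem_subgroup hf
  have hzq : z * q ∈ F := by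
    have hzf : MapClusterPt (z * q) atTop fun n => z * (z⁻¹ * f n) :=
      hfq.continuousAt_comp (continuous_const_mul z).continuousAt
    simp only [mul_inv_cancel_left] at hzf
    exact hF.closure_subset (hzf.mem_closure_of_mem _ (mem_map.2 (univ_mem' hfF)))
  simpa using mul_mem_mul hzq (c.subgroup.inv_mem hq)

theorem isQuasiPerfectMap_mk : IsQuasiPerfectMap (QuotientGroup.mk : G → G ⧸ c.subgroup) :=
  ⟨QuotientGroup.continuous_mk, c.isClosedMap_mk,
    QuotientGroup.isCountablyCompact_preimage_mk c.isCountablyCompact_subgroup⟩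

theorem hasBasis_nhds_mk (x : G) : (𝓝 (x : G ⧸ c.subgroup)).HasBasis (fun _ => True)
    fun n => {y | ((x : G ⧸ c.subgroup), y) ∈ c.entourage n} := by
  refine ⟨fun t => ⟨fun ht => ?_, fun ⟨n, _, hn⟩ => ?_⟩⟩
  · obtain ⟨s, hst, hs, hxs⟩ := mem_nhds_iff.1 ht
    obtain ⟨m, hm⟩ := c.exists_subset_of_isOpen
      ((hs.preimage QuotientGroup.continuous_mk).preimage (continuous_const_mul x))
      fun h hh => by simpa [QuotientGroup.mk_mul_of_mem x hh] using hxs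
    refine ⟨m + 1, trivial, ?_⟩
    rintro _ ⟨a, b, hax, rfl, hab⟩
    have hxa : x⁻¹ * a ∈ c.subgroup := QuotientGroup.eq.1 hax.symm
    apply hst
    simpa [mul_assoc] using hm (c.mul_mem m _ (c.subgroup_subset _ hxa) _ hab)
  · rw [QuotientGroup.nhds_eq, mem_map]
    filter_upwards [c.preimage_mul_left_mem_nhds x n] with g hg
    exact hn ⟨x, g, rfl, rfl, hg⟩

theorem metrizableSpace_quotient : MetrizableSpace (G ⧸ c.subgroup) :=
  have := QuotientGroup.t1Space_iff.2 c.isClosed_subgroup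
  metrizableSpace_of_hasBasis_nhds c.entourage c.entourage_antitone
    (fun _ _ _ => c.swap_mem_entourage) (fun n => ⟨n + 2, c.entourage_comp_subset n⟩)
    (QuotientGroup.mk_surjective.forall.2 c.hasBasis_nhds_mk)

end QChain

end TopologicalGroup

theorem qSpace_iff_quotient_general (G : Type*) [Group G] [TopologicalSpace G] [IsTopologicalGroup G] :
    QSpace G ↔
      ∃ H : Subgroup G, IsClosed (H : Set G) ∧ IsCountablyCompactIn (H : Set G) ∧
        MetrizableSpace (G ⧸ H) ∧
        IsClosedMap (QuotientGroup.mk : G → G ⧸ H) ∧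
          (∀ y : G ⧸ H, IsCountablyCompactIn ((QuotientGroup.mk : G → G ⧸ H) ⁻¹' {y})) := by
  constructor
  · intro hG
    obtain ⟨U, hU⟩ := hG 1
    obtain ⟨c⟩ := hU.nonempty_qChain
    have hmk := c.isQuasiPerfectMap_mk
    exact ⟨c.subgroup, c.isClosed_subgroup,
      isCountablyCompactIn_iff_isCountablyCompact.2 c.isCountablyCompact_subgroup,
      c.metrizableSpace_quotient, hmk.isClosedMap,
      fun y => isCountablyCompactIn_iff_isCountablyCompact.2
        (hmk.isCountablyCompact_preimage_singleton y)⟩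
  · rintro ⟨H, -, -, _, hclosed, hfibre⟩
    exact IsQuasiPerfectMap.qSpace ⟨QuotientGroup.continuous_mk, hclosed,
      fun y => isCountablyCompactIn_iff_isCountablyCompact.1 (hfibre y)⟩

theorem qSpace_iff_quotient (G : Type*) [Group G] [TopologicalSpace G] [IsTopologicalGroup G] [T2Space G] :
    QSpace G ↔
      ∃ H : Subgroup G, IsClosed (H : Set G) ∧ IsCountablyCompactIn (H : Set G) ∧
        MetrizableSpace (G ⧸ H) ∧
        IsClosedMap (QuotientGroup.mk : G → G ⧸ H) ∧
          (∀ y : G ⧸ H, IsCountablyCompactIn ((QuotientGroup.mk : G → G ⧸ H) ⁻¹' {y})) :=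
  qSpace_iff_quotient_general G
end

section
/- A Hausdorff topological group G is a strict q-space if and only if for each open neighborhood U of the identity in G there is a closed sequentially compact subgroup H ⊆ U such that the quotient space G/H is metrizable and the canonical quotient mapping p : G → G/H is sequential-perfect. -/
open Filter Topology Set Pointwise TopologicalSpace

universe u

/-! From a q-sequence at `1` one builds open symmetric `V n` with `V (n + 1) * V (n + 1) ⊆ V n`
inside it. Then `H = ⋂ V n` is a closed subgroup, sequentially compact as a closed subset of the
intersection of the q-sequence, and the q-property forces the `V n` to be a neighbourhood base of
`H`. That base makes `G → G ⧸ H` closed, and the images of `{(a, b) | a⁻¹ * b ∈ V n}` form a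
countable base of a uniformity inducing the topology of `G ⧸ H`, which is therefore metrizable.
Conversely, preimages of a countable neighbourhood base at a point of `G ⧸ H` form a strict
q-sequence, because a closed map with sequentially compact fibres lifts convergent sequences to
sequences with a cluster point. -/

section SequentialCompactness

variable {X Y : Type*} [TopologicalSpace X] [TopologicalSpace Y]

theorem IsSeqCompact.of_isClosed_subset {s t : Set X} (ht : IsSeqCompact t) (hs : IsClosed s)
    (hst : s ⊆ t) : IsSeqCompact s := fun _ hu =>
  let ⟨p, _, φ, hφ, hlim⟩ := ht fun n => hst (hu n)
  ⟨p, hs.mem_of_tendsto hlim (Eventually.of_forall fun n => hu (φ n)), φ, hφ, hlim⟩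

/- Since `f` is closed, the closure of every tail of `u` meets the fibre over `y`; a limit of a
convergent subsequence of these points of the fibre lies in the closure of every tail. -/
theorem exists_mapClusterPt_of_isClosedMap {f : X → Y} (hf : IsClosedMap f) {y : Y}
    (hfib : IsSeqCompact (f ⁻¹' {y})) {u : ℕ → X} (hu : Tendsto (f ∘ u) atTop (𝓝 y)) :
    ∃ p, MapClusterPt p atTop u := by
  have htail (k : ℕ) : ∃ q ∈ closure (u '' Ici k), f q = y :=
    hf.closure_image_subset _ <| mem_closure_of_tendsto hu <|
      eventually_atTop.2 ⟨k, fun n hn => mem_image_of_mem f (mem_image_of_mem u hn)⟩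
  choose q hq hqy using htail
  obtain ⟨p, -, φ, hφ, hlim⟩ := hfib (x := q) hqy
  refine ⟨p, mapClusterPt_atTop_iff_forall_mem_closure.2 fun k => ?_⟩
  refine isClosed_closure.mem_of_tendsto hlim (eventually_atTop.2 ⟨k, fun j hj => ?_⟩)
  exact closure_mono (image_mono (Ici_subset_Ici.2 (hj.trans hφ.le_apply))) (hq (φ j))

theorem strictQSpace_of_isClosedMap [FirstCountableTopology Y] [T1Space Y]
    {f : X → Y} (hcont : Continuous f) (hclosed : IsClosedMap f)
    (hfib : ∀ y, IsSeqCompact (f ⁻¹' {y})) : StrictQSpace X := by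
  intro x
  obtain ⟨s, hs_open, hs⟩ := (nhds_basis_opens (f x)).exists_antitone_subbasis
  have hker : ⋂ n, s n = {f x} := by simpa using hs.1.ker.symm.trans (ker_nhds (f x))
  refine ⟨fun n => f ⁻¹' s n, ⟨fun n => ⟨(hs_open n).2.preimage hcont, (hs_open n).1⟩,
    fun u hu => exists_mapClusterPt_of_isClosedMap hclosed (hfib _) (hs.tendsto hu)⟩, ?_⟩
  rw [← preimage_iInter, hker]
  exact hfib _

theorem exists_subset_of_iInter_closure_subset {V : ℕ → Set X} (hV : Antitone V)
    (hclust : ∀ u : ℕ → X, (∀ n, u n ∈ V n) → ∃ p, MapClusterPt p atTop u) {O : Set X}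
    (hO : IsOpen O) (hsub : ⋂ n, closure (V n) ⊆ O) : ∃ n, V n ⊆ O := by
  by_contra! h
  choose u huV huO using fun n => not_subset.1 (h n)
  obtain ⟨p, hp⟩ := hclust u huV
  have hpV : p ∈ ⋂ n, closure (V n) := mem_iInter.2 fun n =>
    isClosed_closure.mem_of_mapClusterPt hp
      (eventually_atTop.2 ⟨n, fun m hm => subset_closure (hV hm (huV m))⟩)
  exact hO.isClosed_compl.mem_of_mapClusterPt hp (Eventually.of_forall huO) (hsub hpV)

end SequentialCompactness

section GroupNhdsChain

variable {G : Type*} [Group G] [TopologicalSpace G]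

/-- The sequences of neighbourhoods of the identity from the Birkhoff–Kakutani construction. -/
structure IsGroupNhdsChain (V : ℕ → Set G) : Prop where
  isOpen : ∀ n, IsOpen (V n)
  one_mem : ∀ n, (1 : G) ∈ V n
  inv_eq : ∀ n, (V n)⁻¹ = V n
  mul_subset : ∀ n, V (n + 1) * V (n + 1) ⊆ V n

namespace IsGroupNhdsChain

variable {V : ℕ → Set G}

theorem subset_mul_self (hV : IsGroupNhdsChain V) (n : ℕ) : V n ⊆ V n * V n :=
  fun x hx => by simpa using mul_mem_mul hx (hV.one_mem n)

theorem antitone (hV : IsGroupNhdsChain V) : Antitone V :=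
  antitone_nat_of_succ_le fun n => (hV.subset_mul_self _).trans (hV.mul_subset n)

def subgroup (hV : IsGroupNhdsChain V) : Subgroup G where
  carrier := ⋂ n, V n
  one_mem' := mem_iInter.2 hV.one_mem
  mul_mem' ha hb := mem_iInter.2 fun n =>
    hV.mul_subset n (mul_mem_mul (mem_iInter.1 ha _) (mem_iInter.1 hb _))
  inv_mem' ha := mem_iInter.2 fun n => hV.inv_eq n ▸ inv_mem_inv.2 (mem_iInter.1 ha n)

theorem subgroup_subset (hV : IsGroupNhdsChain V) (n : ℕ) : (hV.subgroup : Set G) ⊆ V n :=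
  iInter_subset V n

theorem subgroup_mul_subset (hV : IsGroupNhdsChain V) (n : ℕ) :
    (hV.subgroup : Set G) * V (n + 1) ⊆ V n :=
  (mul_subset_mul_right (hV.subgroup_subset _)).trans (hV.mul_subset n)

variable [IsTopologicalGroup G]

theorem iInter_closure_eq (hV : IsGroupNhdsChain V) :
    ⋂ n, closure (V n) = hV.subgroup := by
  refine Subset.antisymm (subset_iInter fun n => ?_) (iInter_mono fun n => subset_closure)
  exact (iInter_subset _ (n + 1)).trans <| (closure_subset_mul_self_of_mem_nhds_one
    ((hV.isOpen _).mem_nhds (hV.one_mem _))).trans (hV.mul_subset n)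

theorem isClosed_subgroup (hV : IsGroupNhdsChain V) : IsClosed (hV.subgroup : Set G) :=
  hV.iInter_closure_eq ▸ isClosed_iInter fun _ => isClosed_closure

end IsGroupNhdsChain

variable [IsTopologicalGroup G]

theorem exists_open_nhds_one_inv_eq_mul_subset {S : Set G} (hS : S ∈ 𝓝 (1 : G)) :
    ∃ V, IsOpen V ∧ (1 : G) ∈ V ∧ V⁻¹ = V ∧ V * V ⊆ S := by
  obtain ⟨W, hWo, hW1, hWS⟩ := exists_open_nhds_one_mul_subset hS
  exact ⟨W ∩ W⁻¹, hWo.inter hWo.inv, ⟨hW1, by simpa using hW1⟩, by simp [inter_comm],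
    (mul_subset_mul inter_subset_left inter_subset_left).trans hWS⟩

theorem exists_isGroupNhdsChain_subset {W : ℕ → Set G} (hW : ∀ n, W n ∈ 𝓝 (1 : G)) :
    ∃ V, IsGroupNhdsChain V ∧ ∀ n, V n ⊆ W n := by
  choose! half hhalf using fun S (hS : S ∈ 𝓝 (1 : G)) => exists_open_nhds_one_inv_eq_mul_subset hS
  have half_mem {S : Set G} (hS : S ∈ 𝓝 (1 : G)) : half S ∈ 𝓝 (1 : G) :=
    (hhalf S hS).1.mem_nhds (hhalf S hS).2.1
  let V : ℕ → Set G := fun n => Nat.rec (half (W 0)) (fun n Vn => half (Vn ∩ W (n + 1))) n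
  have hV_mem (n : ℕ) : V n ∈ 𝓝 (1 : G) := by
    induction n with
    | zero => exact half_mem (hW 0)
    | succ n ih => exact half_mem (inter_mem ih (hW (n + 1)))
  have hV_eq (n : ℕ) : ∃ S ∈ 𝓝 (1 : G), S ⊆ W n ∧ V n = half S := by
    cases n with
    | zero => exact ⟨W 0, hW 0, subset_rfl, rfl⟩
    | succ n => exact ⟨V n ∩ W (n + 1), inter_mem (hV_mem n) (hW _), inter_subset_right, rfl⟩
  choose S hS hSW hVS using hV_eq
  have hV : IsGroupNhdsChain V :=
    { isOpen n := hVS n ▸ (hhalf _ (hS n)).1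
      one_mem n := hVS n ▸ (hhalf _ (hS n)).2.1
      inv_eq n := hVS n ▸ (hhalf _ (hS n)).2.2.1
      mul_subset n := (hhalf _ (inter_mem (hV_mem n) (hW (n + 1)))).2.2.2.trans inter_subset_left }
  refine ⟨V, hV, fun n => (hV.subset_mul_self n).trans ?_⟩
  rw [hVS n]
  exact (hhalf _ (hS n)).2.2.2.trans (hSW n)

theorem StrictQSpace.exists_isGroupNhdsChain (hG : StrictQSpace G) {U : Set G}
    (hU : U ∈ 𝓝 (1 : G)) :
    ∃ (V : ℕ → Set G) (hV : IsGroupNhdsChain V), (∀ n, V n ⊆ U) ∧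
      IsSeqCompact (hV.subgroup : Set G) ∧
      (𝓝ˢ (hV.subgroup : Set G)).HasBasis (fun _ => True) V := by
  obtain ⟨W, ⟨hW, hWclust⟩, hWseq⟩ := hG 1
  obtain ⟨V, hV, hVW⟩ := exists_isGroupNhdsChain_subset fun n =>
    inter_mem hU ((hW n).1.mem_nhds (hW n).2)
  refine ⟨V, hV, fun n => (hVW n).trans inter_subset_left, ?_, ?_⟩
  · exact hWseq.of_isClosed_subset hV.isClosed_subgroup
      (subset_iInter fun n => (hV.subgroup_subset n).trans ((hVW n).trans inter_subset_right))
  · refine (hasBasis_nhdsSet _).to_hasBasis (fun O ⟨hO, hHO⟩ => ?_)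
      fun n _ => ⟨V n, ⟨hV.isOpen n, hV.subgroup_subset n⟩, subset_rfl⟩
    obtain ⟨n, hn⟩ := exists_subset_of_iInter_closure_subset hV.antitone
      (fun u hu => hWclust u fun n => (hVW n).trans inter_subset_right (hu n)) hO
      (hV.iInter_closure_eq ▸ hHO)
    exact ⟨n, trivial, hn⟩

end GroupNhdsChain

namespace QuotientGroup

open scoped SetRel

variable {G : Type*} [Group G] {H : Subgroup G}

def leftEntourage (H : Subgroup G) (V : Set G) : SetRel (G ⧸ H) (G ⧸ H) :=
  Prod.map mk mk '' {p : G × G | p.1⁻¹ * p.2 ∈ V}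

theorem mk_mem_leftEntourage {V : Set G} {a b : G} (h : a⁻¹ * b ∈ V) :
    ((a : G ⧸ H), (b : G ⧸ H)) ∈ leftEntourage H V :=
  ⟨(a, b), h, rfl⟩

theorem leftEntourage_mono {V W : Set G} (h : V ⊆ W) : leftEntourage H V ⊆ leftEntourage H W :=
  image_mono fun _ hp => h hp

theorem swap_mem_leftEntourage {V : Set G} (hV : V⁻¹ = V) {p : (G ⧸ H) × (G ⧸ H)}
    (h : p ∈ leftEntourage H V) : p.swap ∈ leftEntourage H V := by
  obtain ⟨⟨a, b⟩, hab, rfl⟩ := h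
  refine mk_mem_leftEntourage (hV ▸ ?_)
  simpa using hab

theorem exists_eq_mk_mul_of_mem_leftEntourage {V : Set G} {a : G} {y : G ⧸ H}
    (h : ((a : G ⧸ H), y) ∈ leftEntourage H V) : ∃ v ∈ (H : Set G) * V, y = mk (a * v) := by
  obtain ⟨⟨a', b⟩, hab, heq⟩ := h
  simp only [Prod.map, Prod.mk.injEq] at heq
  obtain ⟨ha', rfl⟩ := heq
  refine ⟨a⁻¹ * b, ⟨a⁻¹ * a', QuotientGroup.eq.1 ha'.symm, a'⁻¹ * b, hab, by group⟩, by group⟩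

theorem leftEntourage_comp_subset (V W : Set G) :
    leftEntourage H V ○ leftEntourage H W ⊆ leftEntourage H (V * ((H : Set G) * W)) := by
  rintro ⟨_, z⟩ ⟨_, ⟨⟨a, b⟩, hab, hxy⟩, hbz⟩
  obtain ⟨rfl, rfl⟩ := Prod.mk.inj hxy
  obtain ⟨v, hv, rfl⟩ := exists_eq_mk_mul_of_mem_leftEntourage hbz
  exact mk_mem_leftEntourage <| by
    simpa [mul_assoc] using mul_mem_mul (show a⁻¹ * b ∈ V from hab) hv

section Topology

variable [TopologicalSpace G] [IsTopologicalGroup G]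

theorem isSeqCompact_preimage_mk (hH : IsSeqCompact (H : Set G)) (y : G ⧸ H) :
    IsSeqCompact ((mk : G → G ⧸ H) ⁻¹' {y}) := by
  obtain ⟨a, rfl⟩ := mk_surjective y
  rw [← image_singleton, preimage_image_mk_eq_mul, singleton_mul]
  exact hH.image (continuous_const_mul a).seqContinuous

theorem isClosedMap_mk_of_forall_mul_subset
    (hH : ∀ O, IsOpen O → (H : Set G) ⊆ O → ∃ W ∈ 𝓝 (1 : G), W * H ⊆ O) :
    IsClosedMap (mk : G → G ⧸ H) := by
  intro F hF
  rw [← (isQuotientMap_mk H).isClosed_preimage, preimage_image_mk_eq_mul, ← isOpen_compl_iff,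
    isOpen_iff_mem_nhds]
  intro a ha
  obtain ⟨W, hW, hWH⟩ := hH ((a * ·) ⁻¹' Fᶜ) (hF.isOpen_compl.preimage (continuous_const_mul a))
    fun k hk hak => ha ⟨a * k, hak, k⁻¹, H.inv_mem hk, by group⟩
  refine mem_of_superset ((continuous_const_mul a⁻¹).continuousAt.preimage_mem_nhds
    (by simpa using hW)) ?_
  rintro x hx ⟨f, hf, k, hk, rfl⟩
  exact hWH (mul_mem_mul hx (H.inv_mem hk)) (by simpa [mul_assoc] using hf)

theorem hasBasis_nhds_mk {ι : Sort*} {p : ι → Prop} {V : ι → Set G}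
    (hV : (𝓝ˢ (H : Set G)).HasBasis p V) (a : G) :
    (𝓝 (a : G ⧸ H)).HasBasis p fun i => mk '' (a • V i) := by
  refine ⟨fun s => ⟨fun hs => ?_, fun ⟨i, hi, hsub⟩ => mem_of_superset ?_ hsub⟩⟩
  · have : (fun g => (mk (a * g) : G ⧸ H)) ⁻¹' s ∈ 𝓝ˢ (H : Set G) :=
      mem_nhdsSet_iff_forall.2 fun h hh =>
        (continuous_mk.comp (continuous_const_mul a)).continuousAt.preimage_mem_nhds
          (by rwa [Function.comp_apply, mk_mul_of_mem a hh])
    obtain ⟨i, hi, hVi⟩ := hV.mem_iff.1 this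
    exact ⟨i, hi, by rintro _ ⟨_, ⟨v, hv, rfl⟩, rfl⟩; exact hVi hv⟩
  · exact isOpenMap_coe.image_mem_nhds
      (smul_mem_nhds_self.2 (mem_nhdsSet_iff_forall.1 (hV.mem_of_mem hi) 1 H.one_mem))

end Topology

end QuotientGroup

namespace IsGroupNhdsChain

open QuotientGroup

variable {G : Type*} [Group G] [TopologicalSpace G] [IsTopologicalGroup G] {V : ℕ → Set G}

theorem isClosedMap_mk (hV : IsGroupNhdsChain V)
    (hbasis : (𝓝ˢ (hV.subgroup : Set G)).HasBasis (fun _ => True) V) :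
    IsClosedMap (QuotientGroup.mk : G → G ⧸ hV.subgroup) :=
  isClosedMap_mk_of_forall_mul_subset fun _ hO hHO =>
    let ⟨n, _, hn⟩ := hbasis.mem_iff.1 (hO.mem_nhdsSet.2 hHO)
    ⟨V (n + 1), (hV.isOpen _).mem_nhds (hV.one_mem _),
      ((mul_subset_mul_left (hV.subgroup_subset _)).trans (hV.mul_subset n)).trans hn⟩

theorem metrizableSpace_quotient (hV : IsGroupNhdsChain V)
    (hbasis : (𝓝ˢ (hV.subgroup : Set G)).HasBasis (fun _ => True) V) :
    MetrizableSpace (G ⧸ hV.subgroup) := by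
  set H := hV.subgroup
  let D : ℕ → SetRel (G ⧸ H) (G ⧸ H) := fun n => leftEntourage H (V n)
  have hD : (⨅ n, 𝓟 (D n)).HasBasis (fun _ => True) D :=
    hasBasis_iInf_principal
      (show Antitone D from fun _ _ h => leftEntourage_mono (hV.antitone h)).directed_ge
  let core : UniformSpace.Core (G ⧸ H) := .mk' (⨅ n, 𝓟 (D n))
    (fun r hr x => by
      obtain ⟨n, -, hn⟩ := hD.mem_iff.1 hr
      obtain ⟨a, rfl⟩ := mk_surjective x
      exact hn (mk_mem_leftEntourage (by simpa using hV.one_mem n)))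
    (fun r hr => by
      obtain ⟨n, -, hn⟩ := hD.mem_iff.1 hr
      exact hD.mem_iff.2 ⟨n, trivial, fun p hp => hn (swap_mem_leftEntourage (hV.inv_eq n) hp)⟩)
    (fun r hr => by
      obtain ⟨n, -, hn⟩ := hD.mem_iff.1 hr
      refine ⟨D (n + 2), hD.mem_of_mem trivial, (leftEntourage_comp_subset _ _).trans
        ((leftEntourage_mono ?_).trans hn)⟩
      exact (mul_subset_mul (hV.antitone (Nat.le_succ _)) (hV.subgroup_mul_subset _)).trans
        (hV.mul_subset n))
  have hnhds (x : G ⧸ H) : 𝓝 x = comap (Prod.mk x) core.uniformity := by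
    obtain ⟨a, rfl⟩ := mk_surjective x
    refine (hasBasis_nhds_mk hbasis a).ext (hD.comap _) (fun n _ => ⟨n + 1, trivial, ?_⟩)
      fun n _ => ⟨n, trivial, ?_⟩
    · intro y hy
      obtain ⟨v, hv, rfl⟩ := exists_eq_mk_mul_of_mem_leftEntourage hy
      exact ⟨a * v, smul_mem_smul_set (hV.subgroup_mul_subset n hv), rfl⟩
    · rintro _ ⟨_, ⟨v, hv, rfl⟩, rfl⟩
      exact mk_mem_leftEntourage (by simpa using hv)
  let _ : UniformSpace (G ⧸ H) := .ofCoreEq core _ <| TopologicalSpace.ext_nhds fun x =>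
    (hnhds x).trans (core.nhds_toTopologicalSpace x).symm
  have : IsCountablyGenerated (uniformity (G ⧸ H)) := hD.isCountablyGenerated
  have : T1Space (G ⧸ H) := t1Space_iff.2 hV.isClosed_subgroup
  exact UniformSpace.metrizableSpace

end IsGroupNhdsChain

theorem strictQSpace_iff_quotient_general (G : Type*) [Group G] [TopologicalSpace G] [IsTopologicalGroup G] :
    StrictQSpace G ↔
      ∀ U : Set G, IsOpen U → (1 : G) ∈ U →
        ∃ H : Subgroup G, IsClosed (H : Set G) ∧ IsSeqCompact (H : Set G) ∧
          (H : Set G) ⊆ U ∧ MetrizableSpace (G ⧸ H) ∧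
          IsClosedMap (QuotientGroup.mk : G → G ⧸ H) ∧
          (∀ y : G ⧸ H, IsSeqCompact ((QuotientGroup.mk : G → G ⧸ H) ⁻¹' {y})) := by
  constructor
  · intro hG U hU hU1
    obtain ⟨V, hV, hVU, hseq, hbasis⟩ := hG.exists_isGroupNhdsChain (hU.mem_nhds hU1)
    exact ⟨hV.subgroup, hV.isClosed_subgroup, hseq, (hV.subgroup_subset 0).trans (hVU 0),
      hV.metrizableSpace_quotient hbasis, hV.isClosedMap_mk hbasis,
      QuotientGroup.isSeqCompact_preimage_mk hseq⟩
  · intro h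
    obtain ⟨H, -, -, -, hmetr, hclosed, hfib⟩ := h univ isOpen_univ (mem_univ 1)
    exact strictQSpace_of_isClosedMap QuotientGroup.continuous_mk hclosed hfib

theorem strictQSpace_iff_quotient (G : Type*) [Group G] [TopologicalSpace G] [IsTopologicalGroup G] [T2Space G] :
    StrictQSpace G ↔
      ∀ U : Set G, IsOpen U → (1 : G) ∈ U →
        ∃ H : Subgroup G, IsClosed (H : Set G) ∧ IsSeqCompact (H : Set G) ∧
          (H : Set G) ⊆ U ∧ MetrizableSpace (G ⧸ H) ∧
          IsClosedMap (QuotientGroup.mk : G → G ⧸ H) ∧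
          (∀ y : G ⧸ H, IsSeqCompact ((QuotientGroup.mk : G → G ⧸ H) ⁻¹' {y})) :=
  strictQSpace_iff_quotient_general G
end

section
/- A Hausdorff topological group G is a strong q-space if and only if for each open neighborhood U of the identity in G there is a closed sequentially compact subgroup H of countable character in G, whose countable neighborhood base is a strong q-sequence at each point x ∈ H, such that the quotient space G/H is metrizable and the canonical quotient mapping p : G → G/H is strongly sequential-perfect. -/
open Filter Topology Set Pointwise TopologicalSpace

universe u

/-!
Shrink a strong q-sequence at `1` to open symmetric neighbourhoods `W n` of `1`
with `W (n + 1) * W (n + 1) ⊆ W n`. Their intersection `H` is a closed subgroup, and every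
sequence that eventually enters each `W n` has a subsequence converging to a point of `H`.
This compactness property gives at once that `H` is sequentially compact and that the `W n`
form a neighbourhood base of `H`. The sets `{(xH, yH) | x⁻¹ * y ∈ W n}` form a countable base
of a uniformity on `G ⧸ H` inducing its topology, so `G ⧸ H` is metrizable. Finally, if
`x_k H → xH`, then `x⁻¹ * x_k` eventually enters each `W n`, so a subsequence of `x_k`
converges to a point of `xH`; this makes the projection closed and sequentially perfect.
Conversely, translating a strong q-sequence at `1` gives one at every point.
-/

theorem IsStrongQSequenceAt.image_homeomorph {X Y : Type*} [TopologicalSpace X]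
    [TopologicalSpace Y] {x : X} {U : ℕ → Set X} (h : IsStrongQSequenceAt x U) (e : X ≃ₜ Y) :
    IsStrongQSequenceAt (e x) fun n => e '' U n := by
  refine ⟨fun n => ⟨e.isOpenMap _ (h.1 n).1, mem_image_of_mem e (h.1 n).2⟩, fun u hu => ?_⟩
  have hu' : ∀ n, e.symm (u n) ∈ U n := fun n => by
    obtain ⟨y, hy, hyu⟩ := hu n
    rwa [← hyu, e.symm_apply_apply]
  obtain ⟨p, φ, hφ, hp⟩ := h.2 (e.symm ∘ u) hu'
  exact ⟨e p, φ, hφ, by simpa [Function.comp_def] using (e.continuous.tendsto p).comp hp⟩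

theorem strongQSpace_of_isStrongQSequenceAt_one {G : Type*} [Group G] [TopologicalSpace G]
    [SeparatelyContinuousMul G] {U : ℕ → Set G} (hU : IsStrongQSequenceAt 1 U) :
    StrongQSpace G := fun x => by
  have hx := hU.image_homeomorph (Homeomorph.mulLeft x)
  simp only [Homeomorph.coe_mulLeft, mul_one] at hx
  exact ⟨_, hx⟩

theorem QuotientGroup.eventually_inv_mul_mem_mul_of_tendsto {G α : Type*} [Group G]
    [TopologicalSpace G] [ContinuousMul G] {H : Subgroup G} {l : Filter α} {u : α → G} {x : G}
    (hu : Tendsto (fun k => (u k : G ⧸ H)) l (𝓝 (x : G ⧸ H))) {O : Set G}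
    (hO : O ∈ 𝓝 (1 : G)) : ∀ᶠ k in l, x⁻¹ * u k ∈ O * H := by
  have hxO : (QuotientGroup.mk '' (x • O) : Set (G ⧸ H)) ∈ 𝓝 (x : G ⧸ H) :=
    QuotientGroup.isOpenMap_coe.image_mem_nhds (smul_mem_nhds_self.2 hO)
  filter_upwards [hu hxO] with k hk
  have hk' : u k ∈ x • O * H := QuotientGroup.preimage_image_mk_eq_mul H _ ▸ hk
  rw [smul_mul_assoc] at hk'
  exact mem_smul_set_iff_inv_smul_mem.1 hk'

section CosetEntourage

variable {G : Type*} [Group G] (H : Subgroup G)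

def cosetEntourage (W : Set G) : SetRel (G ⧸ H) (G ⧸ H) :=
  Prod.map QuotientGroup.mk QuotientGroup.mk '' {p : G × G | p.1⁻¹ * p.2 ∈ W}

variable {H}

theorem cosetEntourage_mono {W W' : Set G} (h : W ⊆ W') :
    cosetEntourage H W ⊆ cosetEntourage H W' :=
  image_mono fun _ hp => h hp

theorem mk_mem_cosetEntourage {W : Set G} {x y : G} (h : x⁻¹ * y ∈ W) :
    ((x : G ⧸ H), (y : G ⧸ H)) ∈ cosetEntourage H W :=
  ⟨(x, y), h, rfl⟩

theorem inv_mul_mem_of_mk_mem_cosetEntourage {W W' : Set G} (hW : (H : Set G) * W * H ⊆ W')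
    {x y : G} (h : ((x : G ⧸ H), (y : G ⧸ H)) ∈ cosetEntourage H W) : x⁻¹ * y ∈ W' := by
  obtain ⟨⟨x', y'⟩, hw, he⟩ := h
  simp only [Prod.map, Prod.mk.injEq] at he
  have hx : x⁻¹ * x' ∈ H := QuotientGroup.eq.1 he.1.symm
  have hy : y'⁻¹ * y ∈ H := QuotientGroup.eq.1 he.2
  have hxy : x⁻¹ * y = x⁻¹ * x' * (x'⁻¹ * y') * (y'⁻¹ * y) := by group
  exact hxy ▸ hW (mul_mem_mul (mul_mem_mul hx hw) hy)

end CosetEntourage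

section SquareChain

variable {G : Type*} [Group G] [TopologicalSpace G]

structure IsSquareChain (W : ℕ → Set G) : Prop where
  isOpen : ∀ n, IsOpen (W n)
  one_mem : ∀ n, (1 : G) ∈ W n
  inv_mem : ∀ n, ∀ g ∈ W n, g⁻¹ ∈ W n
  mul_subset : ∀ n, W (n + 1) * W (n + 1) ⊆ W n

theorem exists_isSquareChain_subset [IsTopologicalGroup G] {U : ℕ → Set G}
    (hU : ∀ n, U n ∈ 𝓝 (1 : G)) : ∃ W : ℕ → Set G, IsSquareChain W ∧ ∀ n, W n ⊆ U n := by
  have half : ∀ O : {O : Set G // O ∈ 𝓝 (1 : G)}, ∃ S : {S : Set G // S ∈ 𝓝 (1 : G)},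
      IsOpen S.1 ∧ (∀ g ∈ S.1, g⁻¹ ∈ S.1) ∧ S.1 * S.1 ⊆ O.1 := by
    rintro ⟨O, hO⟩
    obtain ⟨V, hVo, hV1, hVO⟩ := exists_open_nhds_one_mul_subset hO
    refine ⟨⟨V ∩ V⁻¹, (hVo.inter hVo.inv).mem_nhds ⟨hV1, by simpa using hV1⟩⟩,
      hVo.inter hVo.inv, fun g hg => ⟨hg.2, by simpa using hg.1⟩, ?_⟩
    exact (mul_subset_mul inter_subset_left inter_subset_left).trans hVO
  choose S hSo hSinv hSmul using half
  -- `W n := w (n + 1)` satisfies `W n * W n ⊆ w n ∩ U n`, which gives both requirements.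
  let w : ℕ → {O : Set G // O ∈ 𝓝 (1 : G)} :=
    Nat.rec ⟨univ, univ_mem⟩ fun n O => S ⟨O.1 ∩ U n, inter_mem O.2 (hU n)⟩
  have hw1 : ∀ n, (1 : G) ∈ (w n).1 := fun n => mem_of_mem_nhds (w n).2
  refine ⟨fun n => (w (n + 1)).1, ⟨fun n => hSo _, fun n => hw1 (n + 1), fun n => hSinv _,
    fun n => (hSmul _).trans inter_subset_left⟩, fun n => ?_⟩
  exact (subset_mul_left _ (hw1 (n + 1))).trans ((hSmul _).trans inter_subset_right)

namespace IsSquareChain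

variable {W : ℕ → Set G}

theorem antitone (hW : IsSquareChain W) : Antitone W :=
  antitone_nat_of_succ_le fun n => (subset_mul_left _ (hW.one_mem _)).trans (hW.mul_subset n)

theorem mul_mul_subset (hW : IsSquareChain W) (n : ℕ) :
    W (n + 2) * W (n + 2) * W (n + 2) ⊆ W n :=
  calc W (n + 2) * W (n + 2) * W (n + 2) ⊆ W (n + 1) * W (n + 1) :=
        mul_subset_mul (hW.mul_subset _) (hW.antitone (Nat.le_succ _))
    _ ⊆ W n := hW.mul_subset n

theorem closure_subset [IsTopologicalGroup G] (hW : IsSquareChain W) (n : ℕ) :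
    closure (W (n + 1)) ⊆ W n :=
  (closure_subset_mul_self_of_mem_nhds_one ((hW.isOpen _).mem_nhds (hW.one_mem _))).trans
    (hW.mul_subset n)

def subgroup (hW : IsSquareChain W) : Subgroup G where
  carrier := ⋂ n, W n
  one_mem' := mem_iInter.2 hW.one_mem
  mul_mem' ha hb := mem_iInter.2 fun n =>
    hW.mul_subset n (mul_mem_mul (mem_iInter.1 ha _) (mem_iInter.1 hb _))
  inv_mem' ha := mem_iInter.2 fun n => hW.inv_mem n _ (mem_iInter.1 ha n)

theorem subgroup_subset (hW : IsSquareChain W) (n : ℕ) : (hW.subgroup : Set G) ⊆ W n :=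
  iInter_subset W n

theorem isClosed_subgroup [IsTopologicalGroup G] (hW : IsSquareChain W) :
    IsClosed (hW.subgroup : Set G) :=
  isClosed_of_closure_subset fun _ hx => mem_iInter.2 fun n =>
    hW.closure_subset n (closure_mono (hW.subgroup_subset (n + 1)) hx)

theorem mem_subgroup_of_tendsto [IsTopologicalGroup G] (hW : IsSquareChain W) {α : Type*}
    {l : Filter α} [l.NeBot] {u : α → G} {p : G} (hu : ∀ n, ∀ᶠ k in l, u k ∈ W n)
    (hp : Tendsto u l (𝓝 p)) : p ∈ hW.subgroup :=
  mem_iInter.2 fun n => hW.closure_subset n (mem_closure_of_tendsto hp (hu (n + 1)))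

section CosetSpace

variable {H : Subgroup G}

theorem subgroup_mul_mul_subset (hW : IsSquareChain W) (hHW : ∀ n, (H : Set G) ⊆ W n)
    (n : ℕ) : (H : Set G) * W (n + 2) * H ⊆ W n :=
  (mul_subset_mul (mul_subset_mul_right (hHW _)) (hHW _)).trans (hW.mul_mul_subset n)

theorem hasAntitoneBasis_cosetEntourage (hW : IsSquareChain W) :
    (⨅ n, 𝓟 (cosetEntourage H (W n))).HasAntitoneBasis fun n => cosetEntourage H (W n) :=
  .iInf_principal fun _ _ hmn => cosetEntourage_mono (hW.antitone hmn)

theorem cosetEntourage_comp_subset (hW : IsSquareChain W) (hHW : ∀ n, (H : Set G) ⊆ W n)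
    (n : ℕ) : (cosetEntourage H (W (n + 3))).comp (cosetEntourage H (W (n + 3))) ⊆
      cosetEntourage H (W n) := by
  rintro ⟨a, c⟩ ⟨b, hab, hbc⟩
  obtain ⟨x, rfl⟩ := QuotientGroup.mk_surjective a
  obtain ⟨y, rfl⟩ := QuotientGroup.mk_surjective b
  obtain ⟨z, rfl⟩ := QuotientGroup.mk_surjective c
  have hxy := inv_mul_mem_of_mk_mem_cosetEntourage (hW.subgroup_mul_mul_subset hHW _) hab
  have hyz := inv_mul_mem_of_mk_mem_cosetEntourage (hW.subgroup_mul_mul_subset hHW _) hbc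
  exact mk_mem_cosetEntourage (by simpa using hW.mul_subset n (mul_mem_mul hxy hyz))

def cosetUniformity (hW : IsSquareChain W) (hHW : ∀ n, (H : Set G) ⊆ W n) :
    UniformSpace.Core (G ⧸ H) :=
  .mk' (⨅ n, 𝓟 (cosetEntourage H (W n)))
    (fun r hr q => by
      obtain ⟨n, hn⟩ := hW.hasAntitoneBasis_cosetEntourage.mem_iff.1 hr
      obtain ⟨x, rfl⟩ := QuotientGroup.mk_surjective q
      exact hn (mk_mem_cosetEntourage (by simpa using hW.one_mem n)))
    (fun r hr => by
      obtain ⟨n, hn⟩ := hW.hasAntitoneBasis_cosetEntourage.mem_iff.1 hr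
      refine mem_of_superset (hW.hasAntitoneBasis_cosetEntourage.mem n) ?_
      rintro _ ⟨⟨x, y⟩, hxy, rfl⟩
      exact hn (mk_mem_cosetEntourage (by simpa using hW.inv_mem n _ hxy)))
    (fun r hr => by
      obtain ⟨n, hn⟩ := hW.hasAntitoneBasis_cosetEntourage.mem_iff.1 hr
      exact ⟨_, hW.hasAntitoneBasis_cosetEntourage.mem (n + 3),
        (hW.cosetEntourage_comp_subset hHW n).trans hn⟩)

theorem nhds_mk_eq_comap [ContinuousMul G] (hW : IsSquareChain W)
    (hHW : ∀ n, (H : Set G) ⊆ W n) (hbase : ∀ O, IsOpen O → (H : Set G) ⊆ O → ∃ n, W n ⊆ O)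
    (x : G) :
    𝓝 (x : G ⧸ H) = comap (Prod.mk (x : G ⧸ H)) (⨅ n, 𝓟 (cosetEntourage H (W n))) := by
  have hbasis := hW.hasAntitoneBasis_cosetEntourage.1.comap (Prod.mk (x : G ⧸ H))
  apply le_antisymm
  · refine hbasis.ge_iff.2 fun n _ => ?_
    have hxW : (QuotientGroup.mk '' (x • W n) : Set (G ⧸ H)) ∈ 𝓝 (x : G ⧸ H) :=
      QuotientGroup.isOpenMap_coe.image_mem_nhds
        (smul_mem_nhds_self.2 ((hW.isOpen n).mem_nhds (hW.one_mem n)))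
    refine mem_of_superset hxW ?_
    rintro _ ⟨_, ⟨w, hw, rfl⟩, rfl⟩
    exact mk_mem_cosetEntourage (by simpa using hw)
  · refine (nhds_basis_opens _).ge_iff.2 fun t ⟨hxt, ht⟩ => ?_
    obtain ⟨n, hn⟩ := hbase ((x * ·) ⁻¹' (QuotientGroup.mk ⁻¹' t))
      ((ht.preimage QuotientGroup.continuous_mk).preimage (continuous_const_mul x))
      fun h hh => by simpa [QuotientGroup.mk_mul_of_mem x hh] using hxt
    refine hbasis.mem_iff.2 ⟨n + 2, trivial, fun b hb => ?_⟩
    obtain ⟨y, rfl⟩ := QuotientGroup.mk_surjective b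
    simpa using hn (inv_mul_mem_of_mk_mem_cosetEntourage (hW.subgroup_mul_mul_subset hHW n) hb)

theorem metrizableSpace_quotient [ContinuousMul G] (hW : IsSquareChain W)
    (hHW : ∀ n, (H : Set G) ⊆ W n) (hbase : ∀ O, IsOpen O → (H : Set G) ⊆ O → ∃ n, W n ⊆ O)
    (hH : IsClosed (H : Set G)) : MetrizableSpace (G ⧸ H) := by
  let _ : UniformSpace (G ⧸ H) := .ofCoreEq (hW.cosetUniformity hHW) inferInstance <|
    TopologicalSpace.ext_nhds fun q => by
      obtain ⟨x, rfl⟩ := QuotientGroup.mk_surjective q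
      rw [UniformSpace.Core.nhds_toTopologicalSpace]
      exact hW.nhds_mk_eq_comap hHW hbase x
  have : (uniformity (G ⧸ H)).IsCountablyGenerated :=
    hW.hasAntitoneBasis_cosetEntourage.1.isCountablyGenerated
  have := QuotientGroup.t1Space_iff.2 hH
  exact UniformSpace.metrizableSpace

end CosetSpace

variable [IsTopologicalGroup G]

theorem exists_tendsto_subseq (hW : IsSquareChain W) (hq : IsStrongQSequenceAt 1 W)
    {u : ℕ → G} (hu : ∀ n, ∀ᶠ k in atTop, u k ∈ W n) :
    ∃ p ∈ hW.subgroup, ∃ φ : ℕ → ℕ, StrictMono φ ∧ Tendsto (u ∘ φ) atTop (𝓝 p) := by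
  obtain ⟨ψ, hψ, hψW⟩ := extraction_forall_of_eventually hu
  obtain ⟨p, φ, hφ, hp⟩ := hq.2 (u ∘ ψ) hψW
  have hψφ := hψ.comp hφ
  exact ⟨p, hW.mem_subgroup_of_tendsto (fun n => hψφ.tendsto_atTop.eventually (hu n)) hp,
    ψ ∘ φ, hψφ, hp⟩

theorem isSeqCompact_subgroup (hW : IsSquareChain W) (hq : IsStrongQSequenceAt 1 W) :
    IsSeqCompact (hW.subgroup : Set G) := fun _ hu =>
  hW.exists_tendsto_subseq hq fun n => .of_forall fun k => hW.subgroup_subset n (hu k)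

theorem exists_subset_of_subgroup_subset (hW : IsSquareChain W) (hq : IsStrongQSequenceAt 1 W)
    {O : Set G} (hO : IsOpen O) (hHO : (hW.subgroup : Set G) ⊆ O) : ∃ n, W n ⊆ O := by
  by_contra! h
  choose u huW huO using fun n => not_subset.1 (h n)
  obtain ⟨p, hp, φ, -, hφ⟩ := hW.exists_tendsto_subseq hq fun n =>
    eventually_atTop.2 ⟨n, fun k hk => hW.antitone hk (huW k)⟩
  obtain ⟨k, hk⟩ := (hφ.eventually (hO.mem_nhds (hHO hp))).exists
  exact huO _ hk

theorem metrizableSpace_quotient_subgroup (hW : IsSquareChain W)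
    (hq : IsStrongQSequenceAt 1 W) : MetrizableSpace (G ⧸ hW.subgroup) :=
  hW.metrizableSpace_quotient hW.subgroup_subset
    (fun _ hO hHO => hW.exists_subset_of_subgroup_subset hq hO hHO) hW.isClosed_subgroup

theorem exists_tendsto_subseq_of_tendsto_mk (hW : IsSquareChain W)
    (hq : IsStrongQSequenceAt 1 W) {u : ℕ → G} {x : G}
    (hu : Tendsto (fun k => (u k : G ⧸ hW.subgroup)) atTop (𝓝 (x : G ⧸ hW.subgroup))) :
    ∃ p ∈ hW.subgroup, ∃ φ : ℕ → ℕ, StrictMono φ ∧ Tendsto (u ∘ φ) atTop (𝓝 (x * p)) := by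
  have hxu : ∀ n, ∀ᶠ k in atTop, x⁻¹ * u k ∈ W n := fun n =>
    (QuotientGroup.eventually_inv_mul_mem_mul_of_tendsto hu
      ((hW.isOpen (n + 1)).mem_nhds (hW.one_mem _))).mono fun _ hk =>
        hW.mul_subset n (mul_subset_mul_left (hW.subgroup_subset (n + 1)) hk)
  obtain ⟨p, hp, φ, hφ, hlim⟩ := hW.exists_tendsto_subseq hq hxu
  exact ⟨p, hp, φ, hφ, by simpa [Function.comp_def] using hlim.const_mul x⟩

theorem isClosedMap_mk (hW : IsSquareChain W) (hq : IsStrongQSequenceAt 1 W) :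
    IsClosedMap (QuotientGroup.mk : G → G ⧸ hW.subgroup) := by
  have := hW.metrizableSpace_quotient_subgroup hq
  intro F hF
  refine IsSeqClosed.isClosed fun v q hv hvq => ?_
  choose f hfF hfv using hv
  obtain ⟨x, rfl⟩ := QuotientGroup.mk_surjective q
  obtain ⟨p, hp, φ, -, hlim⟩ :=
    hW.exists_tendsto_subseq_of_tendsto_mk hq (u := f) (by simpa [hfv] using hvq)
  exact ⟨x * p, hF.mem_of_tendsto hlim (.of_forall fun k => hfF _),
    QuotientGroup.mk_mul_of_mem x hp⟩

theorem isSeqCompact_preimage_mk (hW : IsSquareChain W) (hq : IsStrongQSequenceAt 1 W)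
    {F : Set (G ⧸ hW.subgroup)} (hF : IsSeqCompact F) :
    IsSeqCompact ((QuotientGroup.mk : G → G ⧸ hW.subgroup) ⁻¹' F) := by
  intro u hu
  obtain ⟨q, hqF, φ, hφ, hlim⟩ := hF (x := fun n => (u n : G ⧸ hW.subgroup)) hu
  obtain ⟨x, rfl⟩ := QuotientGroup.mk_surjective q
  obtain ⟨p, hp, ψ, hψ, hlim'⟩ := hW.exists_tendsto_subseq_of_tendsto_mk hq (u := u ∘ φ) hlim
  exact ⟨x * p, by simpa [QuotientGroup.mk_mul_of_mem x hp] using hqF, φ ∘ ψ, hφ.comp hψ, hlim'⟩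

end IsSquareChain

end SquareChain

theorem strongQSpace_iff_quotient_general (G : Type*) [Group G] [TopologicalSpace G] [IsTopologicalGroup G] :
    StrongQSpace G ↔
      ∀ U : Set G, IsOpen U → (1 : G) ∈ U →
        ∃ (H : Subgroup G) (V : ℕ → Set G), IsClosed (H : Set G) ∧
          IsSeqCompact (H : Set G) ∧
          (∀ n, IsOpen (V n) ∧ (H : Set G) ⊆ V n) ∧
          (∀ W : Set G, IsOpen W → (H : Set G) ⊆ W → ∃ n, V n ⊆ W) ∧
          (∀ x ∈ (H : Set G), IsStrongQSequenceAt x V) ∧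
          MetrizableSpace (G ⧸ H) ∧
          IsClosedMap (QuotientGroup.mk : G → G ⧸ H) ∧
          (∀ F : Set (G ⧸ H), IsSeqCompact F →
            IsSeqCompact ((QuotientGroup.mk : G → G ⧸ H) ⁻¹' F)) := by
  constructor
  · intro hG _ _ _
    obtain ⟨U, hU⟩ := hG 1
    obtain ⟨W, hW, hWU⟩ := exists_isSquareChain_subset fun n => (hU.1 n).1.mem_nhds (hU.1 n).2
    have hq : IsStrongQSequenceAt 1 W :=
      ⟨fun n => ⟨hW.isOpen n, hW.one_mem n⟩, fun u hu => hU.2 u fun n => hWU n (hu n)⟩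
    exact ⟨hW.subgroup, W, hW.isClosed_subgroup, hW.isSeqCompact_subgroup hq,
      fun n => ⟨hW.isOpen n, hW.subgroup_subset n⟩,
      fun _ hO hHO => hW.exists_subset_of_subgroup_subset hq hO hHO,
      fun _ hx => ⟨fun n => ⟨hW.isOpen n, hW.subgroup_subset n hx⟩, hq.2⟩,
      hW.metrizableSpace_quotient_subgroup hq, hW.isClosedMap_mk hq,
      fun _ hF => hW.isSeqCompact_preimage_mk hq hF⟩
  · intro h
    obtain ⟨H, V, -, -, -, -, hV, -⟩ := h univ isOpen_univ (mem_univ 1)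
    exact strongQSpace_of_isStrongQSequenceAt_one (hV 1 H.one_mem)

theorem strongQSpace_iff_quotient (G : Type*) [Group G] [TopologicalSpace G] [IsTopologicalGroup G] [T2Space G] :
    StrongQSpace G ↔
      ∀ U : Set G, IsOpen U → (1 : G) ∈ U →
        ∃ (H : Subgroup G) (V : ℕ → Set G), IsClosed (H : Set G) ∧
          IsSeqCompact (H : Set G) ∧
          (∀ n, IsOpen (V n) ∧ (H : Set G) ⊆ V n) ∧
          (∀ W : Set G, IsOpen W → (H : Set G) ⊆ W → ∃ n, V n ⊆ W) ∧
          (∀ x ∈ (H : Set G), IsStrongQSequenceAt x V) ∧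
          MetrizableSpace (G ⧸ H) ∧
          IsClosedMap (QuotientGroup.mk : G → G ⧸ H) ∧
          (∀ F : Set (G ⧸ H), IsSeqCompact F →
            IsSeqCompact ((QuotientGroup.mk : G → G ⧸ H) ⁻¹' F)) :=
  strongQSpace_iff_quotient_general G
end

section
/- A Hausdorff topological group G is feathered if and only if G contains a compact subgroup H such that the quotient space G/H is metrizable. -/
open Filter Topology Set Pointwise TopologicalSpace

universe u

/-!
If `K ∋ 1` is compact with a countable neighbourhood base `O n`, choose closed symmetric
neighbourhoods `V n` of `1` with `V (n+1) * V (n+1) ⊆ V n ∩ O n`. Then `H = ⋂ n, V n` is a closed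
subgroup contained in `K`, hence compact, and compactness of `K` forces the `V n` to form a
neighbourhood base of `H`.

For a compact subgroup `H` the left uniformity of `G` descends to `G ⧸ H`, with entourages
`{(xH, yH) | x⁻¹ * y ∈ H * U * H}` (the triangle axiom holds because conjugation by the compact
set `H` is equicontinuous at `1`); a countable neighbourhood base of `H` makes this uniformity
countably generated, so `G ⧸ H` is metrizable. Conversely, the quotient map is closed, so the
neighbourhoods of `H` are the preimages of those of the point `H` of `G ⧸ H`.
-/

section CountableCharacter

variable {X : Type*} [TopologicalSpace X]

theorem hasCountableCharacter_iff_isCountablyGenerated {K : Set X} :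
    HasCountableCharacter K ↔ (𝓝ˢ K).IsCountablyGenerated := by
  constructor
  · rintro ⟨U, hU, hUW⟩
    refine HasBasis.isCountablyGenerated (p := fun _ : ℕ => True) (s := U) ⟨fun t => ?_⟩
    rw [← subset_interior_iff_mem_nhdsSet]
    constructor
    · intro ht
      obtain ⟨n, hn⟩ := hUW _ isOpen_interior ht
      exact ⟨n, trivial, hn.trans interior_subset⟩
    · rintro ⟨n, -, hn⟩
      exact (hU n).2.trans (interior_maximal hn (hU n).1)
  · intro
    obtain ⟨U, hU⟩ := (𝓝ˢ K).exists_antitone_basis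
    refine ⟨fun n => interior (U n),
      fun n => ⟨isOpen_interior, subset_interior_iff_mem_nhdsSet.2 (hU.mem n)⟩,
      fun W hW hKW => ?_⟩
    obtain ⟨n, -, hn⟩ := hU.1.mem_iff.1 (hW.mem_nhdsSet.2 hKW)
    exact ⟨n, interior_subset.trans hn⟩

theorem iInter_subset_of_forall_mem_nhdsSet [T1Space X] {K : Set X} {A : ℕ → Set X}
    (hAK : ∀ U ∈ 𝓝ˢ K, ∃ n, A n ⊆ U) : ⋂ n, A n ⊆ K := by
  intro x hx
  by_contra hxK
  obtain ⟨n, hn⟩ :=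
    hAK {x}ᶜ (isOpen_compl_singleton.mem_nhdsSet.2 (subset_compl_singleton_iff.2 hxK))
  exact hn (mem_iInter.1 hx n) rfl

theorem IsCompact.exists_subset_of_mem_nhdsSet_iInter {K : Set X} (hK : IsCompact K)
    {A : ℕ → Set X} (hA : Antitone A) (hAc : ∀ n, IsClosed (A n))
    (hAK : ∀ U ∈ 𝓝ˢ K, ∃ n, A n ⊆ U) {W : Set X} (hW : W ∈ 𝓝ˢ (⋂ n, A n)) :
    ∃ n, A n ⊆ W := by
  have hcover : K ⊆ ⋃ n, (A n \ interior W)ᶜ := fun x _ => by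
    by_cases hx : x ∈ ⋂ n, A n
    · exact mem_iUnion.2 ⟨0, fun h => h.2 (subset_interior_iff_mem_nhdsSet.2 hW hx)⟩
    · obtain ⟨n, hn⟩ := not_forall.1 (mem_iInter.not.1 hx)
      exact mem_iUnion.2 ⟨n, fun h => hn h.1⟩
  have hopen : ∀ n, IsOpen (A n \ interior W)ᶜ := fun n =>
    ((hAc n).sdiff isOpen_interior).isOpen_compl
  obtain ⟨N, hN⟩ := hK.elim_directed_cover _ hopen hcover
    (Monotone.directed_le fun m n hmn => compl_subset_compl.2 (sdiff_subset_sdiff_left (hA hmn)))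
  obtain ⟨m, hm⟩ := hAK _ ((hopen N).mem_nhdsSet.2 hN)
  refine ⟨max N m, fun x hx => interior_subset (by_contra fun hxW => ?_)⟩
  exact hm (hA (le_max_right _ _) hx) ⟨hA (le_max_left _ _) hx, hxW⟩

end CountableCharacter

theorem Subgroup.exists_coe_eq_iInter {G : Type*} [Group G] {V : ℕ → Set G}
    (h1 : ∀ n, (1 : G) ∈ V n) (hinv : ∀ n, (V n)⁻¹ = V n)
    (hmul : ∀ n, V (n + 1) * V (n + 1) ⊆ V n) : ∃ H : Subgroup G, (H : Set G) = ⋂ n, V n :=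
  ⟨{ carrier := ⋂ n, V n
     one_mem' := mem_iInter.2 h1
     mul_mem' := fun ha hb => mem_iInter.2 fun n =>
       hmul n (mul_mem_mul (mem_iInter.1 ha _) (mem_iInter.1 hb _))
     inv_mem' := fun ha => mem_iInter.2 fun n => by
       rw [← hinv]
       exact Set.inv_mem_inv.2 (mem_iInter.1 ha n) }, rfl⟩

section TopologicalGroup

variable {G : Type*} [Group G] [TopologicalSpace G] [IsTopologicalGroup G]

theorem mul_mem_nhdsSet_of_mem_nhds_one (S : Set G) {U : Set G} (hU : U ∈ 𝓝 1) :
    S * U ∈ 𝓝ˢ S :=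
  mem_nhdsSet_iff_forall.2 fun x hx =>
    mem_of_superset (by simpa using (smul_mem_nhds_smul_iff x).2 hU) (smul_set_subset_mul hx)

theorem exists_seq_closed_nhds_one_inv_eq_mul_subset {U : ℕ → Set G}
    (hU : ∀ n, U n ∈ 𝓝 1) :
    ∃ V : ℕ → Set G, (∀ n, V n ∈ 𝓝 1) ∧ (∀ n, IsClosed (V n)) ∧ (∀ n, (V n)⁻¹ = V n) ∧
      ∀ n, V (n + 1) * V (n + 1) ⊆ V n ∩ U n := by
  choose! next hnext using fun (W : Set G) (n : ℕ) (hW : W ∈ 𝓝 1) =>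
    exists_closed_nhds_one_inv_eq_mul_subset (inter_mem hW (hU n))
  let V : ℕ → Set G := fun n => Nat.rec univ (fun n W => next W n) n
  have hV : ∀ n, V n ∈ 𝓝 1 ∧ IsClosed (V n) ∧ (V n)⁻¹ = V n := by
    intro n
    induction n with
    | zero => exact ⟨univ_mem, isClosed_univ, inv_univ⟩
    | succ n ih =>
      obtain ⟨h1, hc, hinv, -⟩ := hnext _ n ih.1
      exact ⟨h1, hc, hinv⟩
  exact ⟨V, fun n => (hV n).1, fun n => (hV n).2.1, fun n => (hV n).2.2,
    fun n => (hnext _ n (hV n).1).2.2.2⟩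

theorem IsCompact.exists_subgroup_isCompact_countablyGenerated [T1Space G] {K : Set G}
    (hK : IsCompact K) (h1 : (1 : G) ∈ K) [(𝓝ˢ K).IsCountablyGenerated] :
    ∃ H : Subgroup G, IsCompact (H : Set G) ∧ (𝓝ˢ (H : Set G)).IsCountablyGenerated := by
  obtain ⟨O, hO⟩ := (𝓝ˢ K).exists_antitone_basis
  obtain ⟨V, hV1, hVc, hVinv, hVmul⟩ :=
    exists_seq_closed_nhds_one_inv_eq_mul_subset fun n => nhds_le_nhdsSet h1 (hO.mem n)
  have hVsucc : ∀ n, V (n + 1) ⊆ V n ∩ O n := fun n =>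
    (subset_mul_left _ (mem_of_mem_nhds (hV1 _))).trans (hVmul n)
  have hVanti : Antitone V :=
    antitone_nat_of_succ_le fun n => (hVsucc n).trans inter_subset_left
  have hVK : ∀ U ∈ 𝓝ˢ K, ∃ n, V n ⊆ U := fun U hU =>
    let ⟨n, _, hn⟩ := hO.1.mem_iff.1 hU
    ⟨n + 1, (hVsucc n).trans (inter_subset_right.trans hn)⟩
  obtain ⟨H, hH⟩ := Subgroup.exists_coe_eq_iInter (fun n => mem_of_mem_nhds (hV1 n)) hVinv
    fun n => (hVmul n).trans inter_subset_left
  have hVH : ∀ n, V n ∈ 𝓝ˢ (H : Set G) := fun n =>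
    mem_of_superset (mul_mem_nhdsSet_of_mem_nhds_one _ (hV1 (n + 1)))
      ((mul_subset_mul_right (hH ▸ iInter_subset V (n + 1))).trans
        ((hVmul n).trans inter_subset_left))
  refine ⟨H, hK.of_isClosed_subset (hH ▸ isClosed_iInter hVc)
    (hH ▸ iInter_subset_of_forall_mem_nhdsSet hVK), ?_⟩
  refine HasBasis.isCountablyGenerated (p := fun _ : ℕ => True) (s := V)
    ⟨fun W => ⟨fun hW => ?_, fun ⟨n, _, hn⟩ => mem_of_superset (hVH n) hn⟩⟩
  rw [hH] at hW
  obtain ⟨n, hn⟩ := hK.exists_subset_of_mem_nhdsSet_iInter hVanti hVc hVK hW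
  exact ⟨n, trivial, hn⟩

theorem IsFeathered.exists_isCompact_one_mem (hG : IsFeathered G) :
    ∃ K : Set G, IsCompact K ∧ (1 : G) ∈ K ∧ (𝓝ˢ K).IsCountablyGenerated := by
  obtain ⟨K, ⟨k, hk⟩, hK, hKchar⟩ := hG
  rw [hasCountableCharacter_iff_isCountablyGenerated] at hKchar
  refine ⟨k⁻¹ • K, hK.smul k⁻¹, ⟨k, hk, inv_mul_cancel k⟩, ?_⟩
  rw [← image_smul, ← (isOpenMap_smul k⁻¹).map_nhdsSet_eq (continuous_const_smul k⁻¹)]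
  infer_instance

theorem exists_mem_nhds_one_mul_coe_mul_subset {H : Subgroup G} (hH : IsCompact (H : Set G))
    {U : Set G} (hU : U ∈ 𝓝 1) : ∃ V ∈ 𝓝 (1 : G), V * H * V ⊆ H * U := by
  obtain ⟨W, hW, hWU⟩ := exists_nhds_one_split hU
  have hconj : ∀ᶠ v in 𝓝 (1 : G), ∀ h ∈ (H : Set G), h⁻¹ * v * h ∈ W :=
    hH.eventually_forall_of_forall_eventually fun h _ =>
      ((continuous_snd.inv.mul continuous_fst).mul continuous_snd).tendsto' (1, h) 1
        (by simp) hW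
  refine ⟨{v | ∀ h ∈ (H : Set G), h⁻¹ * v * h ∈ W} ∩ W, inter_mem hconj hW, ?_⟩
  rintro _ ⟨_, ⟨v, hv, h, hh, rfl⟩, w, hw, rfl⟩
  exact ⟨h, hh, h⁻¹ * v * h * w, hWU _ (hv.1 h hh) _ hw.2, by group⟩

end TopologicalGroup

namespace QuotientGroup

open scoped SetRel Uniformity

section Entourage

variable {G : Type*} [Group G] (H : Subgroup G)

def cosetEntourage (U : Set G) : Set ((G ⧸ H) × (G ⧸ H)) :=
  {p | ∃ x y : G, (x : G ⧸ H) = p.1 ∧ (y : G ⧸ H) = p.2 ∧ x⁻¹ * y ∈ (H : Set G) * U * H}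

variable {H}

theorem subset_coe_mul_mul_coe (U : Set G) : U ⊆ (H : Set G) * U * H :=
  (subset_mul_right U H.one_mem).trans (subset_mul_left _ H.one_mem)

theorem mk_mem_cosetEntourage {x y : G} {U : Set G} :
    ((x : G ⧸ H), (y : G ⧸ H)) ∈ cosetEntourage H U ↔ x⁻¹ * y ∈ (H : Set G) * U * H := by
  refine ⟨fun ⟨x', y', hx, hy, hxy⟩ => ?_, fun h => ⟨x, y, rfl, rfl, h⟩⟩
  have hsat : (H : Set G) * ((H : Set G) * U * H) * H = (H : Set G) * U * H := by
    rw [← mul_assoc, ← mul_assoc, coe_mul_coe, mul_assoc _ (H : Set G), coe_mul_coe]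
  rw [← hsat, show x⁻¹ * y = x⁻¹ * x' * (x'⁻¹ * y') * (y'⁻¹ * y) by group]
  exact mul_mem_mul (mul_mem_mul (QuotientGroup.eq.1 hx.symm) hxy) (QuotientGroup.eq.1 hy)

theorem cosetEntourage_mono : Monotone (cosetEntourage H) :=
  fun _ _ hUV _ ⟨x, y, hx, hy, hxy⟩ =>
    ⟨x, y, hx, hy, mul_subset_mul_right (mul_subset_mul_left hUV) hxy⟩

theorem cosetEntourage_coe_mul (U : Set G) :
    cosetEntourage H ((H : Set G) * U) = cosetEntourage H U := by
  ext ⟨a, b⟩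
  induction a using QuotientGroup.induction_on
  induction b using QuotientGroup.induction_on
  rw [mk_mem_cosetEntourage, mk_mem_cosetEntourage, ← mul_assoc, coe_mul_coe]

theorem preimage_swap_cosetEntourage (U : Set G) :
    Prod.swap ⁻¹' cosetEntourage H U = cosetEntourage H U⁻¹ := by
  ext ⟨a, b⟩
  induction a using QuotientGroup.induction_on
  induction b using QuotientGroup.induction_on
  rw [mem_preimage, Prod.swap_prod_mk, mk_mem_cosetEntourage, mk_mem_cosetEntourage,
    ← Set.inv_mem_inv]
  simp only [mul_inv_rev, inv_inv, inv_coe_set, mul_assoc]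

theorem cosetEntourage_comp_subset {U V : Set G} (hVU : V * H * V ⊆ H * U) :
    cosetEntourage H V ○ cosetEntourage H V ⊆ cosetEntourage H U := by
  rintro ⟨a, c⟩ ⟨b, hab, hbc⟩
  induction a using QuotientGroup.induction_on with | H x => ?_
  induction b using QuotientGroup.induction_on with | H y => ?_
  induction c using QuotientGroup.induction_on with | H z => ?_
  rw [mk_mem_cosetEntourage] at hab hbc ⊢
  have hsub : (H : Set G) * V * H * ((H : Set G) * V * H) ⊆ H * U * H :=
    calc (H : Set G) * V * H * ((H : Set G) * V * H) = H * (V * (H * H) * V) * H := by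
          simp only [mul_assoc]
      _ = H * (V * H * V) * H := by rw [coe_mul_coe]
      _ ⊆ H * (H * U) * H := by gcongr
      _ = H * U * H := by rw [← mul_assoc, coe_mul_coe]
  rw [show x⁻¹ * z = x⁻¹ * y * (y⁻¹ * z) by group]
  exact hsub (mul_mem_mul hab hbc)

end Entourage

section Uniformity

variable {G : Type*} [Group G] [TopologicalSpace G] {H : Subgroup G}

variable (H) in
def cosetUniformity : Filter ((G ⧸ H) × (G ⧸ H)) :=
  (𝓝 (1 : G)).lift' (cosetEntourage H)

theorem mem_cosetUniformity {s : Set ((G ⧸ H) × (G ⧸ H))} :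
    s ∈ cosetUniformity H ↔ ∃ U ∈ 𝓝 (1 : G), cosetEntourage H U ⊆ s :=
  mem_lift'_sets cosetEntourage_mono

variable [IsTopologicalGroup G]

theorem nhds_eq_comap_cosetUniformity (hH : IsCompact (H : Set G)) (a : G ⧸ H) :
    𝓝 a = comap (Prod.mk a) (cosetUniformity H) := by
  induction a using QuotientGroup.induction_on with | H g => ?_
  ext s
  rw [cosetUniformity, comap_lift'_eq,
    mem_lift'_sets (monotone_preimage.comp cosetEntourage_mono)]
  constructor
  · intro hs
    obtain ⟨O, hOs, hO, hgO⟩ := mem_nhds_iff.1 hs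
    obtain ⟨V, hV, hgHV⟩ := compact_open_separated_mul_right (hH.smul g)
      (hO.preimage continuous_mk) fun _ ⟨h, hh, hgh⟩ => by
        rw [← hgh]
        show ((g * h : G) : G ⧸ H) ∈ O
        rwa [mk_mul_of_mem g hh]
    refine ⟨V, hV, fun p hp => hOs ?_⟩
    induction p using QuotientGroup.induction_on with | H y => ?_
    obtain ⟨_, ⟨h, hh, v, hv, rfl⟩, h', hh', hy⟩ := mk_mem_cosetEntourage.1 hp
    rw [show y = g * h * v * h' from (eq_mul_of_inv_mul_eq hy.symm).trans (by group),
      mk_mul_of_mem _ hh']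
    exact hgHV (mul_mem_mul (smul_mem_smul_set hh) hv)
  · rintro ⟨U, hU, hUs⟩
    have hgU : g • U ∈ 𝓝 g := by simpa using (smul_mem_nhds_smul_iff g).2 hU
    refine mem_of_superset (isOpenMap_coe.image_mem_nhds hgU) ?_
    rintro _ ⟨_, ⟨u, hu, rfl⟩, rfl⟩
    refine hUs (mk_mem_cosetEntourage.2 ?_)
    rw [show g⁻¹ * (g • u) = u from inv_mul_cancel_left g u]
    exact subset_coe_mul_mul_coe U hu

variable (H) in
abbrev cosetUniformSpace (hH : IsCompact (H : Set G)) : UniformSpace (G ⧸ H) :=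
  .ofCoreEq
    (.mk' (cosetUniformity H)
      (fun _ hr a => by
        obtain ⟨U, hU, hUr⟩ := mem_cosetUniformity.1 hr
        induction a using QuotientGroup.induction_on with | H x => ?_
        refine hUr (mk_mem_cosetEntourage.2 ?_)
        rw [inv_mul_cancel]
        exact subset_coe_mul_mul_coe U (mem_of_mem_nhds hU))
      (fun _ hr => by
        obtain ⟨U, hU, hUr⟩ := mem_cosetUniformity.1 hr
        exact mem_cosetUniformity.2 ⟨U⁻¹, inv_mem_nhds_one G hU,
          (preimage_swap_cosetEntourage U).symm.trans_subset (preimage_mono hUr)⟩)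
      (fun _ hr => by
        obtain ⟨U, hU, hUr⟩ := mem_cosetUniformity.1 hr
        obtain ⟨V, hV, hVU⟩ := exists_mem_nhds_one_mul_coe_mul_subset hH hU
        exact ⟨_, mem_cosetUniformity.2 ⟨V, hV, subset_rfl⟩,
          (cosetEntourage_comp_subset hVU).trans hUr⟩))
    inferInstance
    (TopologicalSpace.ext_nhds fun a => by
      rw [UniformSpace.Core.nhds_toTopologicalSpace]
      exact nhds_eq_comap_cosetUniformity hH a)

theorem metrizableSpace_of_isCountablyGenerated_nhdsSet [T2Space G]
    (hH : IsCompact (H : Set G)) [(𝓝ˢ (H : Set G)).IsCountablyGenerated] :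
    MetrizableSpace (G ⧸ H) := by
  let := cosetUniformSpace H hH
  obtain ⟨S, hS⟩ := (𝓝ˢ (H : Set G)).exists_antitone_basis
  have hbasis : (𝓤 (G ⧸ H)).HasBasis (fun _ : ℕ => True) (fun n => cosetEntourage H (S n)) := by
    refine ⟨fun t => ⟨fun ht => ?_, fun ⟨n, _, hn⟩ => mem_cosetUniformity.2
      ⟨S n, nhds_le_nhdsSet H.one_mem (hS.mem n), hn⟩⟩⟩
    obtain ⟨U, hU, hUt⟩ := mem_cosetUniformity.1 ht
    obtain ⟨n, -, hn⟩ := hS.1.mem_iff.1 (mul_mem_nhdsSet_of_mem_nhds_one _ hU)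
    exact ⟨n, trivial,
      (cosetEntourage_mono hn).trans ((cosetEntourage_coe_mul U).trans_subset hUt)⟩
  have := hbasis.isCountablyGenerated
  have := t1Space_iff.2 hH.isClosed
  exact UniformSpace.metrizableSpace

theorem isCountablyGenerated_nhdsSet_of_firstCountableTopology (hH : IsCompact (H : Set G))
    [FirstCountableTopology (G ⧸ H)] : (𝓝ˢ (H : Set G)).IsCountablyGenerated := by
  rw [← preimage_mk_one, ← (isClosedMap_coe hH).comap_nhdsSet_eq continuous_mk,
    nhdsSet_singleton]
  infer_instance

end Uniformity

end QuotientGroup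

theorem feathered_iff_compact_subgroup (G : Type*) [Group G] [TopologicalSpace G] [IsTopologicalGroup G] [T2Space G] :
    IsFeathered G ↔
      ∃ H : Subgroup G, IsCompact (H : Set G) ∧ MetrizableSpace (G ⧸ H) := by
  constructor
  · intro hG
    obtain ⟨K, hK, h1, _⟩ := hG.exists_isCompact_one_mem
    obtain ⟨H, hH, _⟩ := hK.exists_subgroup_isCompact_countablyGenerated h1
    exact ⟨H, hH, QuotientGroup.metrizableSpace_of_isCountablyGenerated_nhdsSet hH⟩
  · rintro ⟨H, hH, _⟩
    exact ⟨H, ⟨1, H.one_mem⟩, hH, hasCountableCharacter_iff_isCountablyGenerated.2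
      (QuotientGroup.isCountablyGenerated_nhdsSet_of_firstCountableTopology hH)⟩
end

section
/- A Hausdorff topological group G is ω-narrow if and only if G is topologically isomorphic to a subgroup of a topological product of some family of second-countable Hausdorff topological groups. -/
open Filter Topology Set Pointwise TopologicalSpace

universe u

structure SCGroup : Type (u + 1) where
  carrier : Type u
  [grp : Group carrier]
  [top : TopologicalSpace carrier]
  [tgrp : IsTopologicalGroup carrier]
  [t2 : T2Space carrier]
  [sc : SecondCountableTopology carrier]

attribute [instance] SCGroup.grp SCGroup.top SCGroup.tgrp SCGroup.t2 SCGroup.sc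

/-!
In an ω-narrow group `G` every neighbourhood `U` of the identity lies in a countable family of
identity neighbourhoods closed under intersections, inverses and halving, and — since ω-narrow
groups are ω-balanced (Guran) — containing, for every `V` in it and every `x`, some `W` with
`x W x⁻¹ ⊆ V`. Such a family is a group filter basis. The coarser group topology it generates is
still ω-narrow and has countable character at the identity, so it is separable and therefore
second countable; its separation quotient is a second-countable Hausdorff group, and `U` contains
the preimage of an identity neighbourhood of it. The diagonal map into the product of these
quotients over all `U` is then an embedding. Conversely, separable groups are ω-narrow, and
ω-narrowness passes to products and to subgroups.
-/

section OmegaNarrow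

variable {G H : Type*} [Group G] [TopologicalSpace G] [Group H] [TopologicalSpace H]

theorem OmegaNarrow.exists_countable_mul_eq_univ [IsTopologicalGroup G] (h : OmegaNarrow G)
    {V : Set G} (hV : V ∈ 𝓝 1) : ∃ A : Set G, A.Countable ∧ A * V = univ := by
  obtain ⟨A, hA, hAV⟩ := h (interior V) isOpen_interior (mem_interior_iff_mem_nhds.2 hV)
  exact ⟨A, hA, univ_subset_iff.1 (hAV ▸ mul_subset_mul_left interior_subset)⟩

theorem OmegaNarrow.map (h : OmegaNarrow G) (f : G →* H) (hf : Continuous f)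
    (hs : Function.Surjective f) : OmegaNarrow H := by
  intro V hV h1V
  obtain ⟨A, hA, hAV⟩ := h (f ⁻¹' V) (hV.preimage hf) (by simpa using h1V)
  refine ⟨f '' A, hA.image f, eq_univ_of_forall fun x => ?_⟩
  obtain ⟨y, rfl⟩ := hs x
  obtain ⟨a, ha, v, hv, rfl⟩ : y ∈ A * f ⁻¹' V := hAV ▸ mem_univ y
  exact ⟨f a, mem_image_of_mem f ha, f v, hv, (map_mul f a v).symm⟩

theorem OmegaNarrow.of_isInducing [IsTopologicalGroup H] (h : OmegaNarrow H) (f : G →* H)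
    (hf : IsInducing f) : OmegaNarrow G := by
  intro V hV h1V
  obtain ⟨U, hU, rfl⟩ := hf.isOpen_iff.1 hV
  obtain ⟨W, hW, -, hWinv, hWU⟩ :=
    exists_closed_nhds_one_inv_eq_mul_subset (hU.mem_nhds (by simpa using h1V))
  obtain ⟨A, hA, hAW⟩ := h.exists_countable_mul_eq_univ hW
  -- pick one point of `G` over each translate `a * W` that meets the range of `f`
  let T : H → Set G := fun a => {x | a⁻¹ * f x ∈ W}
  have : Countable A := hA.to_subtype
  refine ⟨range fun a : {a : A // (T a).Nonempty} => a.2.some, countable_range _,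
    eq_univ_of_forall fun x => ?_⟩
  obtain ⟨a, ha, w, hw, hx⟩ : f x ∈ A * W := hAW ▸ mem_univ _
  have hxT : x ∈ T a := by simpa [T, ← hx] using hw
  set g := (⟨⟨a, ha⟩, x, hxT⟩ : {a : A // (T a).Nonempty}).2.some
  have hgT : g ∈ T a := Set.Nonempty.some_mem _
  refine ⟨g, mem_range_self _, g⁻¹ * x, hWU ?_, mul_inv_cancel_left g x⟩
  refine ⟨(a⁻¹ * f g)⁻¹, hWinv ▸ inv_mem_inv.2 hgT, a⁻¹ * f x, hxT, ?_⟩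
  simp [mul_assoc]

theorem omegaNarrow_of_separableSpace [IsTopologicalGroup G] [SeparableSpace G] :
    OmegaNarrow G := by
  intro V hV h1V
  obtain ⟨D, hD, hDdense⟩ := exists_countable_dense G
  refine ⟨D, hD, eq_univ_of_forall fun x => ?_⟩
  obtain ⟨d, hdD, hd⟩ := hDdense.exists_mem_open (hV.preimage (continuous_inv.mul
    continuous_const : Continuous fun d : G => d⁻¹ * x)) ⟨x, by simpa using h1V⟩
  exact ⟨d, hdD, d⁻¹ * x, hd, mul_inv_cancel_left d x⟩

theorem OmegaNarrow.pi {ι : Type*} {X : ι → Type*} [∀ i, Group (X i)]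
    [∀ i, TopologicalSpace (X i)] (h : ∀ i, OmegaNarrow (X i)) : OmegaNarrow (∀ i, X i) := by
  classical
  intro V hV h1V
  obtain ⟨I, u, hu, hIV⟩ := isOpen_pi_iff.1 hV 1 h1V
  choose A hA hAu using fun i : I => h i (u i) (hu i i.2).1 (hu i i.2).2
  let ext : (∀ i : I, A i) → ∀ i, X i := fun a i => if hi : i ∈ I then a ⟨i, hi⟩ else 1
  have : ∀ i : I, Countable (A i) := fun i => (hA i).to_subtype
  refine ⟨range ext, countable_range ext, eq_univ_of_forall fun x => ?_⟩
  have hx : ∀ i : I, ∃ a ∈ A i, a⁻¹ * x i ∈ u i := fun i => by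
    obtain ⟨a, ha, v, hv, hav⟩ : x i ∈ A i * u i := hAu i ▸ mem_univ _
    exact ⟨a, ha, by simpa [← hav] using hv⟩
  choose a ha hau using hx
  refine ⟨ext fun i => ⟨a i, ha i⟩, ⟨fun i => ⟨a i, ha i⟩, rfl⟩, (ext fun i => ⟨a i, ha i⟩)⁻¹ * x,
    hIV fun i hi => ?_, mul_inv_cancel_left _ x⟩
  simpa [ext, Finset.mem_coe.1 hi] using hau ⟨i, hi⟩

end OmegaNarrow

section CountableCharacter

variable {G : Type*} [Group G] [TopologicalSpace G] [IsTopologicalGroup G]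
  [(𝓝 (1 : G)).IsCountablyGenerated]

theorem OmegaNarrow.separableSpace (h : OmegaNarrow G) : SeparableSpace G := by
  obtain ⟨b, hb⟩ := (𝓝 (1 : G)).exists_antitone_basis
  choose A hA hAb using fun n => h.exists_countable_mul_eq_univ (hb.mem n)
  refine ⟨⋃ n, A n, countable_iUnion hA, dense_iff_inter_open.2 fun W hW ⟨x, hxW⟩ => ?_⟩
  have hWx : (fun v => x * v⁻¹) ⁻¹' W ∈ 𝓝 (1 : G) :=
    (continuous_const.mul continuous_inv).continuousAt.preimage_mem_nhds
      (by simpa using hW.mem_nhds hxW)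
  obtain ⟨n, -, hn⟩ := hb.toHasBasis.mem_iff.1 hWx
  obtain ⟨a, ha, v, hv, rfl⟩ : x ∈ A n * b n := hAb n ▸ mem_univ x
  exact ⟨a, by simpa using hn hv, mem_iUnion_of_mem n ha⟩

theorem OmegaNarrow.secondCountableTopology (h : OmegaNarrow G) : SecondCountableTopology G := by
  let := IsTopologicalGroup.rightUniformSpace G
  have : (uniformity G).IsCountablyGenerated := by
    rw [uniformity_eq_comap_nhds_one']
    exact comap.isCountablyGenerated _ _
  have := h.separableSpace
  exact UniformSpace.secondCountable_of_separable G

end CountableCharacter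

theorem OmegaNarrow.exists_isInducing_scGroupHom {G : Type u} [Group G] [TopologicalSpace G]
    [IsTopologicalGroup G] [(𝓝 (1 : G)).IsCountablyGenerated] (h : OmegaNarrow G) :
    ∃ (K : SCGroup.{u}) (f : G →* K.carrier), IsInducing f := by
  have := h.secondCountableTopology
  have : SecondCountableTopology (SeparationQuotient G) :=
    SeparationQuotient.isQuotientMap_mk.secondCountableTopology SeparationQuotient.isOpenMap_mk
  exact ⟨⟨SeparationQuotient G⟩, SeparationQuotient.mkMonoidHom, SeparationQuotient.isInducing_mk⟩

theorem OmegaNarrow.omegaBalanced {G : Type*} [Group G] [TopologicalSpace G]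
    [IsTopologicalGroup G] (h : OmegaNarrow G) : OmegaBalanced G := by
  intro U hU
  have hconj : ∀ᶠ p : G × G in 𝓝 1 ×ˢ 𝓝 1, p.1⁻¹ * p.2 * p.1 ∈ U := by
    rw [← nhds_prod_eq]
    exact ((continuous_fst.inv.mul continuous_snd).mul continuous_fst).tendsto'
      ((1 : G), (1 : G)) 1 (by simp) hU
  obtain ⟨V, hV, hVU⟩ := (eventually_prod_self_iff (r := fun v w => v⁻¹ * w * v ∈ U)).1 hconj
  obtain ⟨A, hA, hAV⟩ := h.exists_countable_mul_eq_univ hV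
  let conjPre : G → Set G := fun a => (fun w => a⁻¹ * w * a) ⁻¹' interior V
  refine ⟨conjPre '' A, hA.image _, ?_, fun x => ?_⟩
  · rintro _ ⟨a, -, rfl⟩
    exact ⟨isOpen_interior.preimage (by fun_prop),
      by simpa [conjPre] using mem_interior_iff_mem_nhds.2 hV⟩
  -- writing `x⁻¹ = a * v`, conjugation by `x` is conjugation by `a⁻¹` followed by `v⁻¹`
  obtain ⟨a, ha, v, hv, hxav⟩ : x⁻¹ ∈ A * V := hAV ▸ mem_univ _
  refine ⟨conjPre a, mem_image_of_mem _ ha, fun w hw => ?_⟩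
  have hx : x = v⁻¹ * a⁻¹ := by rw [← mul_inv_rev, ← inv_inv x]; exact congrArg _ hxav.symm
  simpa [hx, mul_assoc] using hVU v hv _ (interior_subset hw)

theorem exists_countable_closure {α : Type*} (next : α → α → Set α)
    (hnext : ∀ a b, (next a b).Countable) (a₀ : α) :
    ∃ S : Set α, S.Countable ∧ a₀ ∈ S ∧ ∀ a ∈ S, ∀ b ∈ S, next a b ⊆ S := by
  let stage : ℕ → Set α := fun n => Nat.rec {a₀} (fun _ s => s ∪ ⋃ a ∈ s, ⋃ b ∈ s, next a b) n
  have hmono : Monotone stage := monotone_nat_of_le_succ fun n => subset_union_left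
  refine ⟨⋃ n, stage n, countable_iUnion fun n => ?_, mem_iUnion_of_mem 0 rfl, ?_⟩
  · induction n with
    | zero => exact countable_singleton a₀
    | succ n ih => exact ih.union (ih.biUnion fun a _ => ih.biUnion fun b _ => hnext a b)
  · intro a ha b hb c hc
    obtain ⟨m, ha⟩ := mem_iUnion.1 ha
    obtain ⟨k, hb⟩ := mem_iUnion.1 hb
    refine mem_iUnion_of_mem (max m k + 1) (Or.inr ?_)
    exact mem_biUnion (hmono (le_max_left m k) ha) (mem_biUnion (hmono (le_max_right m k) hb) hc)

theorem OmegaBalanced.exists_countable_groupFilterBasis {G : Type*} [Group G] [TopologicalSpace G]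
    [IsTopologicalGroup G] (h : OmegaBalanced G) {U : Set G} (hU : U ∈ 𝓝 1) :
    ∃ B : GroupFilterBasis G, B.sets.Countable ∧ U ∈ B ∧ ∀ V ∈ B, V ∈ 𝓝 1 := by
  choose γ hγ hγnhds hγconj using h
  choose half hhalf hhalf_mul using fun V : (𝓝 (1 : G)).sets => exists_nhds_one_split V.2
  let next : (𝓝 (1 : G)).sets → (𝓝 (1 : G)).sets → Set (𝓝 (1 : G)).sets := fun V W =>
    {⟨V⁻¹, inv_mem_nhds_one G V.2⟩, ⟨V ∩ W, inter_mem V.2 W.2⟩, ⟨half V, hhalf V⟩} ∪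
      {V' | V'.1 ∈ γ V V.2}
  obtain ⟨S, hS, hUS, hSnext⟩ := exists_countable_closure next
    (fun V _ => (toFinite _).countable.union ((hγ V V.2).preimage Subtype.val_injective))
    ⟨U, hU⟩
  have hnextS {V W} (hV : V ∈ S) (hW : W ∈ S) (V') (hV' : V' ∈ next V W) : V'.1 ∈ (↑) '' S :=
    mem_image_of_mem _ (hSnext V hV W hW hV')
  refine ⟨{ sets := (↑) '' S
            nonempty := ⟨U, mem_image_of_mem _ hUS⟩
            inter_sets := ?_
            one' := ?_
            mul' := ?_
            inv' := ?_
            conj' := ?_ }, hS.image _, mem_image_of_mem _ hUS, ?_⟩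
  · rintro _ _ ⟨V, hV, rfl⟩ ⟨W, hW, rfl⟩
    exact ⟨_, hnextS hV hW ⟨_, inter_mem V.2 W.2⟩ (.inl (.inr (.inl rfl))), subset_rfl⟩
  · rintro _ ⟨V, -, rfl⟩
    exact mem_of_mem_nhds V.2
  · rintro _ ⟨V, hV, rfl⟩
    exact ⟨_, hnextS hV hV ⟨_, hhalf V⟩ (.inl (.inr (.inr rfl))), mul_subset_iff.2 (hhalf_mul V)⟩
  · rintro _ ⟨V, hV, rfl⟩
    exact ⟨_, hnextS hV hV ⟨_, inv_mem_nhds_one G V.2⟩ (.inl (.inl rfl)),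
      fun x hx => by simpa using hx⟩
  · rintro x₀ _ ⟨V, hV, rfl⟩
    obtain ⟨W, hWγ, hW⟩ := hγconj V V.2 x₀
    have hW1 := hγnhds V V.2 W hWγ
    exact ⟨W, hnextS hV hV ⟨W, hW1.1.mem_nhds hW1.2⟩ (.inr hWγ), hW⟩
  · rintro _ ⟨V, -, rfl⟩
    exact V.2

/-- A copy of `G`, so that it can carry the topology of `B` alongside its own. -/
def WithGroupFilterBasis {G : Type*} [Group G] (_B : GroupFilterBasis G) : Type _ := G

namespace WithGroupFilterBasis

variable {G : Type*} [Group G] (B : GroupFilterBasis G)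

instance : Group (WithGroupFilterBasis B) := inferInstanceAs (Group G)

instance : TopologicalSpace (WithGroupFilterBasis B) := B.topology

instance : IsTopologicalGroup (WithGroupFilterBasis B) := B.isTopologicalGroup

def ofGroup : G →* WithGroupFilterBasis B := MonoidHom.id G

theorem ofGroup_surjective : Function.Surjective (ofGroup B) := Function.surjective_id

theorem nhds_one_hasBasis : (𝓝 (1 : WithGroupFilterBasis B)).HasBasis (· ∈ B) id :=
  B.nhds_one_hasBasis

theorem isCountablyGenerated_nhds_one (hB : B.sets.Countable) :
    (𝓝 (1 : WithGroupFilterBasis B)).IsCountablyGenerated :=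
  HasCountableBasis.isCountablyGenerated ⟨nhds_one_hasBasis B, hB⟩

theorem continuous_ofGroup [TopologicalSpace G] [IsTopologicalGroup G]
    (hB : ∀ V ∈ B, V ∈ 𝓝 (1 : G)) : Continuous (ofGroup B) :=
  continuous_of_continuousAt_one (ofGroup B) <| (nhds_one_hasBasis B).tendsto_right_iff.2 hB

end WithGroupFilterBasis

theorem OmegaNarrow.exists_continuous_scGroupHom_preimage_subset {G : Type u} [Group G]
    [TopologicalSpace G] [IsTopologicalGroup G] (h : OmegaNarrow G) {U : Set G} (hU : U ∈ 𝓝 1) :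
    ∃ (K : SCGroup.{u}) (f : G →* K.carrier), Continuous f ∧ ∃ W ∈ 𝓝 1, f ⁻¹' W ⊆ U := by
  obtain ⟨B, hBc, hUB, hBnhds⟩ := h.omegaBalanced.exists_countable_groupFilterBasis hU
  have := WithGroupFilterBasis.isCountablyGenerated_nhds_one B hBc
  have hcont := WithGroupFilterBasis.continuous_ofGroup B hBnhds
  obtain ⟨K, f, hf⟩ :=
    (h.map _ hcont (WithGroupFilterBasis.ofGroup_surjective B)).exists_isInducing_scGroupHom
  have hUf : U ∈ comap f (𝓝 1) := by
    rw [← map_one f, ← hf.nhds_eq_comap]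
    exact (WithGroupFilterBasis.nhds_one_hasBasis B).mem_of_mem hUB
  obtain ⟨W, hW, hWU⟩ := hUf
  exact ⟨K, f.comp (WithGroupFilterBasis.ofGroup B), hf.continuous.comp hcont, W, hW, hWU⟩

theorem isEmbedding_pi_of_forall_nhds_one {G : Type*} [Group G] [TopologicalSpace G]
    [IsTopologicalGroup G] [T0Space G] {ι : Type*} {H : ι → Type*} [∀ i, Group (H i)]
    [∀ i, TopologicalSpace (H i)] [∀ i, IsTopologicalGroup (H i)] (f : ∀ i, G →* H i)
    (hf : ∀ i, Continuous (f i)) (hU : ∀ U ∈ 𝓝 (1 : G), ∃ i, ∃ W ∈ 𝓝 1, f i ⁻¹' W ⊆ U) :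
    IsEmbedding (MonoidHom.pi f) := by
  have hind : IsInducing (MonoidHom.pi f) := by
    refine IsTopologicalGroup.isInducing_iff_nhds_one.2 <|
      le_antisymm ((continuous_pi hf).tendsto' 1 1 (map_one (MonoidHom.pi f))).le_comap
        fun U hU' => ?_
    obtain ⟨i, W, hW, hWU⟩ := hU U hU'
    exact ⟨Function.eval i ⁻¹' W, (continuous_apply i).continuousAt.preimage_mem_nhds hW, hWU⟩
  exact ⟨hind, hind.injective⟩

theorem omegaNarrow_iff_embeds_in_product (G : Type u) [Group G] [TopologicalSpace G]
    [IsTopologicalGroup G] [T2Space G] :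
    OmegaNarrow G ↔
      ∃ (ι : Type u) (F : ι → SCGroup.{u}) (f : G →* ∀ i, (F i).carrier),
        IsEmbedding f := by
  constructor
  · intro h
    choose K f hf W hW hWU using fun U : (𝓝 (1 : G)).sets =>
      h.exists_continuous_scGroupHom_preimage_subset U.2
    exact ⟨_, K, MonoidHom.pi f,
      isEmbedding_pi_of_forall_nhds_one f hf fun U hU => ⟨⟨U, hU⟩, W _, hW _, hWU _⟩⟩
  · rintro ⟨ι, K, f, hf⟩
    exact (OmegaNarrow.pi fun i => omegaNarrow_of_separableSpace).of_isInducing f hf.isInducing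
end

section
/- Let G be an ω-narrow Hausdorff topological group. Then: (a) every Hausdorff topological group H that is the image of G under a continuous surjective group homomorphism is ω-narrow; and (b) if G is first-countable, then G has a countable base (is second-countable). -/
open Filter Topology Set Pointwise TopologicalSpace

universe u

/-!
(a) If `A * f⁻¹(V) = G`, then applying `f` gives `f(A) * V = H`.

(b) Let `(Bₙ)` be a countable base at `1` and choose countable `Aₙ` with `Aₙ * (int Bₙ)⁻¹ = G`.
Every `x` is `a * w` with `a ∈ Aₙ` and `w⁻¹ ∈ Bₙ`, so `a = x * w⁻¹` lies in the basic
neighbourhood `x * Bₙ` of `x`; hence `⋃ Aₙ` is dense. A first-countable group carries a uniformity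
with countably generated filter, and a separable such uniform space is second countable.
-/

theorem OmegaNarrow.of_surjective {G H : Type*} [Group G] [TopologicalSpace G] [Group H]
    [TopologicalSpace H] (hG : OmegaNarrow G) (f : G →* H) (hf : Continuous f)
    (hsurj : Function.Surjective f) : OmegaNarrow H := by
  intro V hV h1V
  obtain ⟨A, hAc, hAV⟩ := hG (f ⁻¹' V) (hV.preimage hf) (by simpa using h1V)
  refine ⟨f '' A, hAc.image f, ?_⟩
  rw [← image_preimage_eq V hsurj, ← image_mul, hAV, image_univ_of_surjective hsurj]

theorem OmegaNarrow.separableSpace_s19 {G : Type*} [Group G] [TopologicalSpace G]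
    [IsTopologicalGroup G] [FirstCountableTopology G] (hG : OmegaNarrow G) :
    SeparableSpace G := by
  obtain ⟨B, hB⟩ := (𝓝 (1 : G)).exists_antitone_basis
  have hone (n : ℕ) : (1 : G) ∈ (interior (B n))⁻¹ := by
    simpa using mem_interior_iff_mem_nhds.2 (hB.mem n)
  choose A hAc hAB using fun n ↦ hG _ isOpen_interior.inv (hone n)
  refine ⟨⋃ n, A n, countable_iUnion hAc, fun x ↦ ?_⟩
  rw [mem_closure_iff_nhds_basis (nhds_translation_inv_mul x ▸ hB.toHasBasis.comap (x⁻¹ * ·))]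
  intro n _
  obtain ⟨a, ha, w, hw, rfl⟩ : x ∈ A n * (interior (B n))⁻¹ := hAB n ▸ mem_univ x
  exact ⟨a, mem_iUnion_of_mem n ha, by simpa using interior_subset hw⟩

theorem IsTopologicalGroup.secondCountableTopology_of_separable {G : Type*} [Group G]
    [TopologicalSpace G] [IsTopologicalGroup G] [FirstCountableTopology G] [SeparableSpace G] :
    SecondCountableTopology G :=
  letI := IsTopologicalGroup.rightUniformSpace G
  haveI : (uniformity G).IsCountablyGenerated := by
    rw [uniformity_eq_comap_nhds_one']
    infer_instance
  UniformSpace.secondCountable_of_separable G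

theorem omegaNarrow_image_and_secondCountable_general (G : Type u) [Group G]
    [TopologicalSpace G] [IsTopologicalGroup G] (hG : OmegaNarrow G) :
    (∀ (H : Type u) [Group H] [TopologicalSpace H] [IsTopologicalGroup H] [T2Space H]
        (f : G →* H), Continuous f → Function.Surjective f → OmegaNarrow H) ∧
      (FirstCountableTopology G → SecondCountableTopology G) := by
  refine ⟨fun H _ _ _ _ f hf hsurj ↦ hG.of_surjective f hf hsurj, fun _ ↦ ?_⟩
  have := hG.separableSpace_s19
  exact IsTopologicalGroup.secondCountableTopology_of_separable

theorem omegaNarrow_image_and_secondCountable (G : Type u) [Group G]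
    [TopologicalSpace G] [IsTopologicalGroup G] [T2Space G] (hG : OmegaNarrow G) :
    (∀ (H : Type u) [Group H] [TopologicalSpace H] [IsTopologicalGroup H] [T2Space H]
        (f : G →* H), Continuous f → Function.Surjective f → OmegaNarrow H) ∧
      (FirstCountableTopology G → SecondCountableTopology G) :=
  omegaNarrow_image_and_secondCountable_general G hG
end
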